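/- arXiv:1110.1756 — 11 statements merged into one kernel-verified Lean document; each statement's English description precedes it below -/
import Mathlib

section
/- For every integer n ≥ 2, every n-uniform clique H = (V, E) with chromatic number χ(H) = 3 satisfies |E| ≤ n^n. -/
/-- A proper coloring of the hypergraph with edge set `E` using `k` colors:
no edge is monochromatic. -/
def IsProper (E : Finset (Finset ℕ)) (k : ℕ) : Prop :=
  ∃ f : ℕ → Fin k, ∀ e ∈ E, ∃ x ∈ e, ∃ y ∈ e, f x ≠ f y

/-- The chromatic number of the hypergraph with edge set `E`. -/
noncomputable def chromNum (E : Finset (Finset ℕ)) : ℕ :=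
  sInf {k | IsProper E k}

theorem erdos_lovasz_upper_bound (n : ℕ) (hn : 2 ≤ n)
    (V : Finset ℕ) (E : Finset (Finset ℕ))
    (hsub : ∀ e ∈ E, e ⊆ V) (hunif : ∀ e ∈ E, e.card = n)
    (hclique : ∀ e ∈ E, ∀ f ∈ E, (e ∩ f).Nonempty)
    (hchrom : chromNum E = 3) :
    E.card ≤ n ^ n := by
  -- E is not properly 2-colorable
  have h2 : ¬ IsProper E 2 := by
    intro h
    have hle : chromNum E ≤ 2 := csInf_le (OrderBot.bddBelow _) h
    omega
  -- Key lemma: if S contains no edge... counting edges containing S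
  have hkey : ∀ k : ℕ, ∀ S : Finset ℕ, n - S.card ≤ k →
      (E.filter (fun f => S ⊆ f)).card ≤ n ^ (n - S.card) := by
    intro k
    induction k with
    | zero =>
      intro S hS
      have hScard : n ≤ S.card := by omega
      have : n - S.card = 0 := by omega
      rw [this, pow_zero]
      apply Finset.card_le_one.mpr
      intro a ha b hb
      simp only [Finset.mem_filter] at ha hb
      have ha' : a = S := by
        symm; apply Finset.eq_of_subset_of_card_le ha.2
        rw [hunif a ha.1]; exact hScard
      have hb' : b = S := by
        symm; apply Finset.eq_of_subset_of_card_le hb.2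
        rw [hunif b hb.1]; exact hScard
      rw [ha', hb']
    | succ k ih =>
      intro S hS
      by_cases hScard : n ≤ S.card
      · have : n - S.card = 0 := by omega
        rw [this, pow_zero]
        apply Finset.card_le_one.mpr
        intro a ha b hb
        simp only [Finset.mem_filter] at ha hb
        have ha' : a = S := by
          symm; apply Finset.eq_of_subset_of_card_le ha.2
          rw [hunif a ha.1]; exact hScard
        have hb' : b = S := by
          symm; apply Finset.eq_of_subset_of_card_le hb.2
          rw [hunif b hb.1]; exact hScard
        rw [ha', hb']
      · push_neg at hScard
        by_cases hedge : ∃ e ∈ E, e ⊆ S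
        · -- some edge inside S: at most one edge contains S
          obtain ⟨e, heE, heS⟩ := hedge
          have hle1 : (E.filter (fun f => S ⊆ f)).card ≤ 1 := by
            apply Finset.card_le_one.mpr
            intro a ha b hb
            simp only [Finset.mem_filter] at ha hb
            have ha' : a = e := by
              symm
              apply Finset.eq_of_subset_of_card_le (heS.trans ha.2)
              rw [hunif a ha.1, hunif e heE]
            have hb' : b = e := by
              symm
              apply Finset.eq_of_subset_of_card_le (heS.trans hb.2)
              rw [hunif b hb.1, hunif e heE]
            rw [ha', hb']
          calc (E.filter (fun f => S ⊆ f)).card ≤ 1 := hle1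
            _ ≤ n ^ (n - S.card) := Nat.one_le_pow _ _ (by omega)
        · -- no edge inside S: there is an edge disjoint from S
          push_neg at hedge
          have hdisj : ∃ e ∈ E, Disjoint e S := by
            by_contra hcon
            push_neg at hcon
            apply h2
            refine ⟨fun x => if x ∈ S then 0 else 1, ?_⟩
            intro e he
            obtain ⟨x, hx⟩ := Finset.not_disjoint_iff.mp (hcon e he)
            obtain ⟨y, hy, hyS⟩ : ∃ y ∈ e, y ∉ S := by
              by_contra hcon2
              push_neg at hcon2
              exact hedge e he hcon2
            exact ⟨x, hx.1, y, hy, by simp [hx.2, hyS]⟩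
          obtain ⟨e, heE, heS⟩ := hdisj
          -- every edge containing S meets e
          have hcover : E.filter (fun f => S ⊆ f) ⊆
              e.biUnion (fun v => E.filter (fun f => insert v S ⊆ f)) := by
            intro f hf
            simp only [Finset.mem_filter] at hf
            obtain ⟨v, hv⟩ := hclique e heE f hf.1
            rw [Finset.mem_inter] at hv
            apply Finset.mem_biUnion.mpr
            exact ⟨v, hv.1, Finset.mem_filter.mpr ⟨hf.1,
              Finset.insert_subset hv.2 hf.2⟩⟩
          have hpow : ∀ v ∈ e, (E.filter (fun f => insert v S ⊆ f)).card ≤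
              n ^ (n - S.card - 1) := by
            intro v hv
            have hvS : v ∉ S := Finset.disjoint_left.mp heS hv
            have hcard : (insert v S).card = S.card + 1 :=
              Finset.card_insert_of_notMem hvS
            have := ih (insert v S) (by omega)
            rwa [hcard, show n - (S.card + 1) = n - S.card - 1 from by omega] at this
          calc (E.filter (fun f => S ⊆ f)).card
              ≤ (e.biUnion (fun v => E.filter (fun f => insert v S ⊆ f))).card :=
                Finset.card_le_card hcover
            _ ≤ ∑ v ∈ e, (E.filter (fun f => insert v S ⊆ f)).card :=
                Finset.card_biUnion_le
            _ ≤ ∑ v ∈ e, n ^ (n - S.card - 1) := Finset.sum_le_sum hpow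
            _ = n * n ^ (n - S.card - 1) := by
                rw [Finset.sum_const, hunif e heE, smul_eq_mul]
            _ = n ^ (n - S.card) := by
                conv_rhs => rw [show n - S.card = (n - S.card - 1) + 1 from by omega]
                rw [pow_succ]; ring
  have := hkey n ∅ (by simp)
  simpa using this
end

section
/- For every integer n ≥ 2 there exists an n-uniform clique H = (V, E) with chromatic number χ(H) = 3 such that |E| ≥ n! · (1/1! + 1/2! + … + 1/n!). -/
open Nat

lemma isProper_mono {E : Finset (Finset ℕ)} {k l : ℕ} (h : IsProper E k) (hkl : k ≤ l) :
    IsProper E l := by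
  obtain ⟨f, hf⟩ := h
  refine ⟨fun x => Fin.castLE hkl (f x), fun e he => ?_⟩
  obtain ⟨x, hx, y, hy, hxy⟩ := hf e he
  exact ⟨x, hx, y, hy, fun h => hxy (Fin.castLE_injective hkl h)⟩

lemma key (n : ℕ) (hn : 2 ≤ n) : ∃ (V : Finset ℕ) (E : Finset (Finset ℕ)),
    (∀ e ∈ E, e ⊆ V) ∧ (∀ e ∈ E, e.card = n) ∧
    (∀ e ∈ E, ∀ f ∈ E, (e ∩ f).Nonempty) ∧
    E.Nonempty ∧
    (∀ g : ℕ → Fin 2, ∃ e ∈ E, ∀ x ∈ e, ∀ y ∈ e, g x = g y) ∧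
    IsProper E 3 ∧
    (n ! : ℝ) * (∑ i ∈ Finset.Icc 1 n, (1 : ℝ) / (i !)) ≤ (E.card : ℝ) := by
  induction n, hn using Nat.le_induction with
  | base =>
    refine ⟨{0,1,2}, {{0,1},{1,2},{0,2}}, ?_, ?_, ?_, ?_, ?_, ?_, ?_⟩
    · decide
    · decide
    · decide
    · exact ⟨{0,1}, by decide⟩
    · intro g
      by_cases c1 : (g 0).val = (g 1).val
      · refine ⟨{0,1}, by decide, ?_⟩
        intro x hx y hy
        fin_cases hx <;> fin_cases hy <;> simp_all [Fin.ext_iff]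
      by_cases c2 : (g 1).val = (g 2).val
      · refine ⟨{1,2}, by decide, ?_⟩
        intro x hx y hy
        fin_cases hx <;> fin_cases hy <;> simp_all [Fin.ext_iff]
      · have h0 := (g 0).isLt; have h1 := (g 1).isLt; have h2 := (g 2).isLt
        have c3 : (g 0).val = (g 2).val := by omega
        refine ⟨{0,2}, by decide, ?_⟩
        intro x hx y hy
        fin_cases hx <;> fin_cases hy <;> simp_all [Fin.ext_iff]
    · refine ⟨fun x => if x = 0 then 0 else if x = 1 then 1 else 2, ?_⟩
      intro e he
      simp only [Finset.mem_insert, Finset.mem_singleton] at he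
      rcases he with rfl | rfl | rfl
      · exact ⟨0, by decide, 1, by decide, by decide⟩
      · exact ⟨1, by decide, 2, by decide, by decide⟩
      · exact ⟨0, by decide, 2, by decide, by decide⟩
    · have hIcc : Finset.Icc 1 2 = {1, 2} := by decide
      have hc : ({{0,1},{1,2},{0,2}} : Finset (Finset ℕ)).card = 3 := by decide
      rw [hIcc, hc]
      norm_num [Nat.factorial]
  | succ n hn ih =>
    obtain ⟨V, E, hsub, hcard, hint, hne, h2col, ⟨f, hf⟩, hcount⟩ := ih
    set M := V.sup id with hM
    set v : ℕ → ℕ := fun i => M + 1 + i with hv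
    have hvinj : Function.Injective v := fun a b h => by simp [hv] at h; omega
    have hxM : ∀ x ∈ V, x ≤ M := fun x hx => Finset.le_sup (f := id) hx
    have hvV : ∀ i, v i ∉ V := by
      intro i hi
      have h := hxM _ hi
      simp only [hv] at h
      omega
    set K : Finset ℕ := (Finset.range (n+1)).image v with hK
    set E' : Finset (Finset ℕ) :=
      insert K (((Finset.range (n+1)) ×ˢ E).image (fun p => insert (v p.1) p.2)) with hE'
    have hvK : ∀ i < n + 1, v i ∈ K := by
      intro i hi
      exact Finset.mem_image_of_mem v (Finset.mem_range.mpr hi)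
    have hmemK : ∀ x ∈ K, ∃ i < n + 1, x = v i := by
      intro x hx
      simp only [hK, Finset.mem_image, Finset.mem_range] at hx
      obtain ⟨i, hi, rfl⟩ := hx
      exact ⟨i, hi, rfl⟩
    have hKcard : K.card = n + 1 := by
      rw [hK, Finset.card_image_of_injective _ hvinj, Finset.card_range]
    -- membership characterization of E'
    have hmemE' : ∀ e ∈ E', e = K ∨ ∃ i < n + 1, ∃ F ∈ E, e = insert (v i) F := by
      intro e he
      rw [hE', Finset.mem_insert] at he
      rcases he with rfl | he
      · exact Or.inl rfl
      · right
        simp only [Finset.mem_image, Finset.mem_product, Finset.mem_range] at he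
        obtain ⟨⟨i, F⟩, ⟨hi, hF⟩, rfl⟩ := he
        exact ⟨i, hi, F, hF, rfl⟩
    have hviF : ∀ i, ∀ F ∈ E, v i ∉ F := fun i F hF h => hvV i (hsub F hF h)
    refine ⟨V ∪ K, E', ?_, ?_, ?_, ?_, ?_, ?_, ?_⟩
    · intro e he
      rcases hmemE' e he with rfl | ⟨i, hi, F, hF, rfl⟩
      · exact Finset.subset_union_right
      · intro x hx
        rcases Finset.mem_insert.mp hx with rfl | hx
        · exact Finset.mem_union_right _ (hvK i hi)
        · exact Finset.mem_union_left _ (hsub F hF hx)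
    · intro e he
      rcases hmemE' e he with rfl | ⟨i, hi, F, hF, rfl⟩
      · exact hKcard
      · rw [Finset.card_insert_of_notMem (hviF i F hF), hcard F hF]
    · intro e he e' he'
      rcases hmemE' e he with rfl | ⟨i, hi, F, hF, rfl⟩ <;>
        rcases hmemE' e' he' with rfl | ⟨j, hj, G, hG, rfl⟩
      · exact ⟨v 0, by simp [hvK 0 (by omega)]⟩
      · exact ⟨v j, Finset.mem_inter.mpr ⟨hvK j hj, Finset.mem_insert_self _ _⟩⟩
      · exact ⟨v i, Finset.mem_inter.mpr ⟨Finset.mem_insert_self _ _, hvK i hi⟩⟩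
      · obtain ⟨z, hz⟩ := hint F hF G hG
        rw [Finset.mem_inter] at hz
        exact ⟨z, Finset.mem_inter.mpr
          ⟨Finset.mem_insert_of_mem hz.1, Finset.mem_insert_of_mem hz.2⟩⟩
    · exact ⟨K, Finset.mem_insert_self _ _⟩
    · -- not 2-colorable
      intro g
      obtain ⟨F, hF, hFmono⟩ := h2col g
      have hFne : F.Nonempty := by
        rw [← Finset.card_pos, hcard F hF]; omega
      obtain ⟨x₀, hx₀⟩ := hFne
      by_cases hc : ∃ i < n + 1, g (v i) = g x₀
      · obtain ⟨i, hi, hgi⟩ := hc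
        refine ⟨insert (v i) F, ?_, ?_⟩
        · rw [hE', Finset.mem_insert]
          right
          rw [Finset.mem_image]
          exact ⟨(i, F), Finset.mem_product.mpr ⟨Finset.mem_range.mpr hi, hF⟩, rfl⟩
        · have hall : ∀ x ∈ insert (v i) F, g x = g x₀ := by
            intro x hx
            rcases Finset.mem_insert.mp hx with rfl | hx
            · exact hgi
            · exact hFmono x hx x₀ hx₀
          intro x hx y hy
          rw [hall x hx, hall y hy]
      · push_neg at hc
        refine ⟨K, Finset.mem_insert_self _ _, ?_⟩
        have hall : ∀ x ∈ K, g x ≠ g x₀ := by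
          intro x hx
          obtain ⟨i, hi, rfl⟩ := hmemK x hx
          exact hc i hi
        intro x hx y hy
        have h1 := hall x hx
        have h2 := hall y hy
        have e1 := (g x).isLt; have e2 := (g y).isLt; have e3 := (g x₀).isLt
        simp only [ne_eq, Fin.ext_iff] at h1 h2 ⊢
        omega
    · -- 3-colorable
      refine ⟨fun x => if x = v 0 then 0 else if M < x then 1 else f x, ?_⟩
      intro e he
      rcases hmemE' e he with rfl | ⟨i, hi, F, hF, rfl⟩
      · refine ⟨v 0, hvK 0 (by omega), v 1, hvK 1 (by omega), ?_⟩
        have h01 : v 1 ≠ v 0 := by simp only [hv]; omega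
        have hM1 : M < v 1 := by simp only [hv]; omega
        simp [h01, hM1]
      · obtain ⟨x, hx, y, hy, hxy⟩ := hf F hF
        have hxV := hsub F hF hx
        have hyV := hsub F hF hy
        have hx0 : x ≠ v 0 := fun h => hvV 0 (h ▸ hxV)
        have hy0 : y ≠ v 0 := fun h => hvV 0 (h ▸ hyV)
        have hxM' : ¬ M < x := not_lt.mpr (hxM x hxV)
        have hyM' : ¬ M < y := not_lt.mpr (hxM y hyV)
        exact ⟨x, Finset.mem_insert_of_mem hx, y, Finset.mem_insert_of_mem hy,
          by simp [hx0, hy0, hxM', hyM', hxy]⟩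
    · -- cardinality
      have hKnot : K ∉ ((Finset.range (n+1)) ×ˢ E).image (fun p => insert (v p.1) p.2) := by
        intro h
        simp only [Finset.mem_image, Finset.mem_product, Finset.mem_range] at h
        obtain ⟨⟨i, F⟩, ⟨hi, hF⟩, heq⟩ := h
        have hFne : F.Nonempty := by rw [← Finset.card_pos, hcard F hF]; omega
        obtain ⟨x, hx⟩ := hFne
        have hxK : x ∈ K := heq ▸ Finset.mem_insert_of_mem hx
        obtain ⟨j, hj, rfl⟩ := hmemK x hxK
        exact hvV j (hsub F hF hx)
      have hinjOn : Set.InjOn (fun p : ℕ × Finset ℕ => insert (v p.1) p.2)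
          (((Finset.range (n+1)) ×ˢ E : Finset (ℕ × Finset ℕ)) : Set (ℕ × Finset ℕ)) := by
        rintro ⟨i, F⟩ hiF ⟨j, G⟩ hjG heq
        simp only [Finset.mem_coe, Finset.mem_product, Finset.mem_range] at hiF hjG
        have heq' : insert (v i) F = insert (v j) G := heq
        have hij : v i = v j := by
          have h1 : v i ∈ insert (v j) G := heq' ▸ Finset.mem_insert_self (v i) F
          rcases Finset.mem_insert.mp h1 with h | h
          · exact h
          · exact absurd h (hviF i G hjG.2)
        have hFG : F = G := by
          rw [← Finset.erase_insert (hviF i F hiF.2), ← Finset.erase_insert (hviF j G hjG.2),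
            heq', hij]
        simp only [Prod.mk.injEq]
        exact ⟨hvinj hij, hFG⟩
      have hcard' : E'.card = 1 + (n + 1) * E.card := by
        rw [hE', Finset.card_insert_of_notMem hKnot, Finset.card_image_of_injOn hinjOn,
          Finset.card_product, Finset.card_range]
        ring
      rw [hcard']
      have hsum : ∑ i ∈ Finset.Icc 1 (n+1), (1:ℝ)/ i ! =
          (∑ i ∈ Finset.Icc 1 n, (1:ℝ)/ i !) + 1/(n+1)! := by
        rw [← Finset.sum_Icc_succ_top (by omega : 1 ≤ n + 1)]
      rw [hsum]
      have hfac : ((n+1)! : ℝ) = (n+1) * n ! := by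
        push_cast [Nat.factorial_succ]; ring
      have hfpos : (0:ℝ) < ((n+1)! : ℝ) := by positivity
      have key : ((n+1)! : ℝ) * ((∑ i ∈ Finset.Icc 1 n, (1:ℝ)/ i !) + 1/(n+1)!) =
          (n+1) * ((n ! : ℝ) * ∑ i ∈ Finset.Icc 1 n, (1:ℝ)/ i !) + 1 := by
        rw [mul_add, hfac]
        field_simp
      rw [key]
      push_cast
      have hn1 : (0:ℝ) ≤ (n:ℝ) + 1 := by positivity
      nlinarith [hcount]

theorem erdos_lovasz_lower_bound (n : ℕ) (hn : 2 ≤ n) :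
    ∃ (V : Finset ℕ) (E : Finset (Finset ℕ)),
      (∀ e ∈ E, e ⊆ V) ∧ (∀ e ∈ E, e.card = n) ∧
      (∀ e ∈ E, ∀ f ∈ E, (e ∩ f).Nonempty) ∧
      chromNum E = 3 ∧
      (n ! : ℝ) * (∑ i ∈ Finset.Icc 1 n, (1 : ℝ) / (i !)) ≤ (E.card : ℝ) := by
  obtain ⟨V, E, hsub, hcard, hint, hne, h2col, h3, hcount⟩ := key n hn
  refine ⟨V, E, hsub, hcard, hint, ?_, hcount⟩
  have hnot2 : ¬ IsProper E 2 := by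
    rintro ⟨g, hg⟩
    obtain ⟨e, he, hmono⟩ := h2col g
    obtain ⟨x, hx, y, hy, hxy⟩ := hg e he
    exact hxy (hmono x hx y hy)
  have hlow : ∀ k, IsProper E k → 3 ≤ k := by
    intro k hk
    by_contra h
    push_neg at h
    exact hnot2 (isProper_mono hk (by omega))
  have h3' : (3 : ℕ) ∈ {k | IsProper E k} := h3
  show sInf {k | IsProper E k} = 3
  exact le_antisymm (Nat.sInf_le h3') (hlow _ (Nat.sInf_mem ⟨3, h3'⟩))
end

section
/- Let n ≥ 2 and let m be an integer with 2 ≤ m ≤ n/2. Set q = ⌊n/(2m)⌋, Q = {1, …, q} ∪ {n−q+1, …, n}, and A = ∑_{i=0}^{2q} C(n^m, i). Let H = (V, E) be an n-uniform hypergraph with |V| ≤ n^m, and let W ⊆ V be nonempty with |W| = i. Then either there exists a vertex x ∈ W whose degree deg x (the number of edges containing x) satisfies deg x ≥ (|E| − A)/i, or there exist two distinct edges B₁, B₂ ∈ E, each disjoint from W, such that |B₁ ∩ B₂| ∉ Q. -/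
open Finset

/-- The degree of a vertex `x`: the number of edges of `E` containing `x`. -/
def edgeDeg (E : Finset (Finset ℕ)) (x : ℕ) : ℕ :=
  (E.filter (fun e => x ∈ e)).card

noncomputable section FW

/-- Indicator function of containing `T`. -/
def eFun (T : Finset ℕ) : Finset ℕ → ℝ := fun S => if T ⊆ S then 1 else 0

lemma mul_mem_span (V A : Finset ℕ) (hA : A ⊆ V) (l : ℝ) (k : ℕ)
    (f : Finset ℕ → ℝ)
    (hf : f ∈ Submodule.span ℝ (eFun '' {T | T ⊆ V ∧ T.card ≤ k})) :
    (fun S => (((A ∩ S).card : ℝ) - l) * f S) ∈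
      Submodule.span ℝ (eFun '' {T | T ⊆ V ∧ T.card ≤ k + 1}) := by
  classical
  set μ : Finset ℕ → ℝ := fun S => (((A ∩ S).card : ℝ) - l) with hμ
  let Φ : (Finset ℕ → ℝ) →ₗ[ℝ] (Finset ℕ → ℝ) :=
    { toFun := fun f S => μ S * f S
      map_add' := by intro f g; funext S; simp; ring
      map_smul' := by intro c f; funext S; simp; ring }
  have key : Submodule.span ℝ (eFun '' {T | T ⊆ V ∧ T.card ≤ k}) ≤
      Submodule.comap Φ (Submodule.span ℝ (eFun '' {T | T ⊆ V ∧ T.card ≤ k + 1})) := by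
    rw [Submodule.span_le]
    rintro g ⟨T, ⟨hTV, hTk⟩, rfl⟩
    simp only [SetLike.mem_coe, Submodule.mem_comap]
    have hrw : Φ (eFun T) = (∑ v ∈ A, eFun (insert v T)) - l • eFun T := by
      funext S
      simp only [Φ, LinearMap.coe_mk, AddHom.coe_mk, Pi.sub_apply, Pi.smul_apply,
        Finset.sum_apply, smul_eq_mul, eFun, hμ]
      by_cases hTS : T ⊆ S
      · have h1 : ∀ v, insert v T ⊆ S ↔ v ∈ S := by
          intro v
          constructor
          · intro h; exact h (mem_insert_self v T)
          · intro h; exact insert_subset h hTS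
        simp only [hTS, if_true, mul_one]
        have h2 : ∑ v ∈ A, (if insert v T ⊆ S then (1:ℝ) else 0)
            = ∑ v ∈ A, (if v ∈ S then (1:ℝ) else 0) :=
          Finset.sum_congr rfl fun v _ => by simp [h1 v]
        rw [h2, Finset.sum_boole, Finset.filter_mem_eq_inter]
      · have : ∀ v ∈ A, ¬ insert v T ⊆ S := by
          intro v _ h
          exact hTS (Finset.Subset.trans (Finset.subset_insert v T) h)
        simp only [hTS, if_false, mul_zero]
        rw [Finset.sum_congr rfl fun v hv => if_neg (this v hv)]
        simp
    rw [hrw]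
    refine Submodule.sub_mem _ (Submodule.sum_mem _ fun v hv => ?_) (Submodule.smul_mem _ _ ?_)
    · exact Submodule.subset_span ⟨insert v T, ⟨insert_subset (hA hv) hTV,
        le_trans (card_insert_le v T) (by omega)⟩, rfl⟩
    · exact Submodule.subset_span ⟨T, ⟨hTV, by omega⟩, rfl⟩
  exact key hf


lemma prod_mem_span (V A : Finset ℕ) (hA : A ⊆ V) (L : Finset ℕ) :
    (fun S => ∏ l ∈ L, (((A ∩ S).card : ℝ) - (l : ℝ))) ∈
      Submodule.span ℝ (eFun '' {T | T ⊆ V ∧ T.card ≤ L.card}) := by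
  classical
  induction L using Finset.cons_induction with
  | empty =>
      have : (fun (_ : Finset ℕ) => (1:ℝ)) = eFun ∅ := by
        funext S; simp [eFun]
      simp only [Finset.prod_empty]
      rw [this]
      exact Submodule.subset_span ⟨∅, ⟨Finset.empty_subset V, by simp⟩, rfl⟩
  | cons l L hl ih =>
      have := mul_mem_span V A hA (l : ℝ) L.card _ ih
      have hrw : (fun S => ∏ x ∈ Finset.cons l L hl, (((A ∩ S).card : ℝ) - (x : ℝ)))
          = fun S => (((A ∩ S).card : ℝ) - (l : ℝ)) * ∏ x ∈ L, (((A ∩ S).card : ℝ) - (x : ℝ)) := by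
        funext S; rw [Finset.prod_cons]
      rw [hrw, Finset.card_cons]
      exact this

lemma frankl_wilson (V : Finset ℕ) (F : Finset (Finset ℕ)) (n : ℕ) (L : Finset ℕ)
    (hsub : ∀ A ∈ F, A ⊆ V) (hcard : ∀ A ∈ F, A.card = n)
    (hL : ∀ l ∈ L, l < n)
    (hint : ∀ A ∈ F, ∀ B ∈ F, A ≠ B → (A ∩ B).card ∈ L) :
    F.card ≤ ∑ i ∈ Finset.range (L.card + 1), (V.card).choose i := by
  classical
  set D : Finset (Finset ℕ) :=
    (Finset.range (L.card + 1)).biUnion (fun i => V.powersetCard i) with hD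
  have hDset : (↑D : Set (Finset ℕ)) = {T | T ⊆ V ∧ T.card ≤ L.card} := by
    ext T
    simp only [hD, coe_biUnion, Finset.mem_coe, Finset.mem_biUnion, Finset.mem_range,
      Finset.mem_powersetCard, Set.mem_setOf_eq, Set.mem_iUnion]
    constructor
    · rintro ⟨i, hi, hT, rfl⟩; exact ⟨hT, by omega⟩
    · rintro ⟨hT, hc⟩; exact ⟨T.card, by omega, hT, rfl⟩
  set s : Finset (Finset ℕ → ℝ) := D.image eFun with hs
  set g : Finset ℕ → (Finset ℕ → ℝ) :=
    fun A S => ∏ l ∈ L, (((A ∩ S).card : ℝ) - (l : ℝ)) with hg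
  have hmem : ∀ A ∈ F, g A ∈ Submodule.span ℝ (↑s : Set (Finset ℕ → ℝ)) := by
    intro A hA
    have := prod_mem_span V A (hsub A hA) L
    rwa [hs, Finset.coe_image, hDset]
  let v : {A // A ∈ F} → ↥(Submodule.span ℝ (↑s : Set (Finset ℕ → ℝ))) :=
    fun A => ⟨g A.1, hmem A.1 A.2⟩
  have hdiag : ∀ A ∈ F, g A A ≠ 0 := by
    intro A hA
    rw [hg]
    simp only
    rw [Finset.inter_self, hcard A hA]
    refine Finset.prod_ne_zero_iff.2 fun l hl => ?_
    have := hL l hl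
    have : (l : ℝ) < (n : ℝ) := by exact_mod_cast this
    linarith
  have hoff : ∀ A ∈ F, ∀ B ∈ F, A ≠ B → g A B = 0 := by
    intro A hA B hB hne
    rw [hg]
    simp only
    refine Finset.prod_eq_zero (hint A hA B hB hne) ?_
    rw [Finset.inter_comm]
    ring
  have hli : LinearIndependent ℝ v := by
    rw [Fintype.linearIndependent_iff]
    intro c hc B
    have hc' : (∑ A : {A // A ∈ F}, c A • g A.1) = 0 := by
      have := congrArg (Submodule.subtype _) hc
      simpa [v, Finset.sum_apply, map_sum] using congrArg Subtype.val hc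
    have := congrFun hc' B.1
    simp only [Finset.sum_apply, Pi.smul_apply, smul_eq_mul, Pi.zero_apply] at this
    rw [Finset.sum_eq_single B] at this
    · rcases mul_eq_zero.1 this with h | h
      · exact h
      · exact absurd h (hdiag B.1 B.2)
    · intro A _ hAB
      rw [hoff A.1 A.2 B.1 B.2 (fun h => hAB (Subtype.ext h)), mul_zero]
    · intro h; exact absurd (Finset.mem_univ B) h
  have hcard1 : Fintype.card {A // A ∈ F} ≤
      Module.finrank ℝ ↥(Submodule.span ℝ (↑s : Set (Finset ℕ → ℝ))) :=
    hli.fintype_card_le_finrank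
  have hcard2 : Module.finrank ℝ ↥(Submodule.span ℝ (↑s : Set (Finset ℕ → ℝ))) ≤ s.card :=
    finrank_span_finset_le_card s
  have hcard3 : s.card ≤ D.card := Finset.card_image_le
  have hcard4 : D.card ≤ ∑ i ∈ Finset.range (L.card + 1), (V.card).choose i := by
    refine le_trans (Finset.card_biUnion_le) ?_
    exact Finset.sum_le_sum fun i _ => le_of_eq (Finset.card_powersetCard i V)
  calc F.card = Fintype.card {A // A ∈ F} := (Fintype.card_coe F).symm
    _ ≤ _ := le_trans hcard1 (le_trans hcard2 (le_trans hcard3 hcard4))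

end FW

theorem lemma_one (n m : ℕ) (hn : 2 ≤ n) (hm : 2 ≤ m) (hmn : 2 * m ≤ n)
    (V : Finset ℕ) (E : Finset (Finset ℕ))
    (hsub : ∀ e ∈ E, e ⊆ V) (hunif : ∀ e ∈ E, e.card = n)
    (hV : V.card ≤ n ^ m)
    (W : Finset ℕ) (hW : W ⊆ V) (hWne : W.Nonempty) :
    (∃ x ∈ W,
        ((E.card : ℝ) -
            ((∑ i ∈ Finset.range (2 * (n / (2 * m)) + 1),
                Nat.choose (n ^ m) i : ℕ) : ℝ)) / (W.card : ℝ)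
          ≤ (edgeDeg E x : ℝ)) ∨
    (∃ B₁ ∈ E, ∃ B₂ ∈ E, B₁ ≠ B₂ ∧ B₁ ∩ W = ∅ ∧ B₂ ∩ W = ∅ ∧
        (B₁ ∩ B₂).card ∉
          Finset.Icc 1 (n / (2 * m)) ∪ Finset.Icc (n - n / (2 * m) + 1) n) := by
  classical
  set q := n / (2 * m) with hq
  set A : ℕ := ∑ i ∈ Finset.range (2 * q + 1), Nat.choose (n ^ m) i with hA
  set E' : Finset (Finset ℕ) := E.filter (fun B => B ∩ W = ∅) with hE'
  by_cases hcase : E'.card ≤ A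
  · -- averaging argument
    left
    obtain ⟨x, hxW, hxmax⟩ := W.exists_max_image (fun y => edgeDeg E y) hWne
    refine ⟨x, hxW, ?_⟩
    -- double counting
    have hdc : ∑ y ∈ W, edgeDeg E y = ∑ B ∈ E, (B ∩ W).card := by
      unfold edgeDeg
      simp only [Finset.card_filter]
      rw [Finset.sum_comm]
      refine Finset.sum_congr rfl fun B _ => ?_
      rw [← Finset.card_filter, Finset.filter_mem_eq_inter, Finset.inter_comm]
    have hmeets : (E.filter (fun B => ¬ (B ∩ W = ∅))).card ≤ ∑ B ∈ E, (B ∩ W).card := by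
      calc (E.filter (fun B => ¬ (B ∩ W = ∅))).card
          = ∑ B ∈ E.filter (fun B => ¬ (B ∩ W = ∅)), 1 := by rw [Finset.card_eq_sum_ones]
        _ ≤ ∑ B ∈ E.filter (fun B => ¬ (B ∩ W = ∅)), (B ∩ W).card := by
            refine Finset.sum_le_sum fun B hB => ?_
            have := (Finset.mem_filter.1 hB).2
            exact Nat.one_le_iff_ne_zero.2 (fun h => this (Finset.card_eq_zero.1 h))
        _ ≤ ∑ B ∈ E, (B ∩ W).card :=
            Finset.sum_le_sum_of_subset (Finset.filter_subset _ _)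
    have hsplit : E'.card + (E.filter (fun B => ¬ (B ∩ W = ∅))).card = E.card :=
      Finset.card_filter_add_card_filter_not _
    have hkey : E.card ≤ A + W.card * edgeDeg E x := by
      have h1 : ∑ y ∈ W, edgeDeg E y ≤ W.card * edgeDeg E x := by
        calc ∑ y ∈ W, edgeDeg E y ≤ ∑ _y ∈ W, edgeDeg E x :=
              Finset.sum_le_sum fun y hy => hxmax y hy
          _ = W.card * edgeDeg E x := by rw [Finset.sum_const, smul_eq_mul]
      have h2 : E.card ≤ A + ∑ B ∈ E, (B ∩ W).card := by omega
      have h3 : ∑ B ∈ E, (B ∩ W).card ≤ W.card * edgeDeg E x := hdc ▸ h1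
      exact le_trans h2 (Nat.add_le_add_left h3 A)
    have hkey' : E.card ≤ A + W.card * edgeDeg E x := hkey
    have hWpos : (0:ℝ) < (W.card : ℝ) := by
      exact_mod_cast Finset.card_pos.2 hWne
    rw [div_le_iff₀ hWpos, sub_le_iff_le_add]
    have : (E.card : ℝ) ≤ (A : ℝ) + (W.card : ℝ) * (edgeDeg E x : ℝ) := by
      exact_mod_cast hkey'
    linarith
  · -- Frankl–Wilson argument
    right
    by_contra hcon
    push_neg at hcon
    set L : Finset ℕ := ((Finset.Icc 1 q ∪ Finset.Icc (n - q + 1) n).erase n) with hL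
    have hq1 : 1 ≤ q := by
      rw [hq]; exact Nat.one_le_div_iff (by omega) |>.2 hmn
    have hqlt : q < n := Nat.div_lt_self (by omega) (by omega)
    have hLlt : ∀ l ∈ L, l < n := by
      intro l hl
      rw [hL] at hl
      obtain ⟨hne, hl⟩ := Finset.mem_erase.1 hl
      rcases Finset.mem_union.1 hl with h | h
      · exact lt_of_le_of_lt (Finset.mem_Icc.1 h).2 hqlt
      · exact lt_of_le_of_ne (Finset.mem_Icc.1 h).2 hne
    have hLcard : L.card ≤ 2 * q := by
      have h1 : (Finset.Icc 1 q).card = q := by rw [Nat.card_Icc]; omega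
      have h2 : (Finset.Icc (n - q + 1) n).card = q := by rw [Nat.card_Icc]; omega
      calc L.card ≤ (Finset.Icc 1 q ∪ Finset.Icc (n - q + 1) n).card :=
            Finset.card_le_card (Finset.erase_subset _ _)
        _ ≤ (Finset.Icc 1 q).card + (Finset.Icc (n - q + 1) n).card :=
            Finset.card_union_le _ _
        _ = 2 * q := by omega
    have hfw := frankl_wilson V E' n L
      (fun B hB => hsub B (Finset.mem_filter.1 hB).1)
      (fun B hB => hunif B (Finset.mem_filter.1 hB).1)
      hLlt
      (by
        intro B₁ hB₁ B₂ hB₂ hne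
        obtain ⟨hB₁E, hB₁W⟩ := Finset.mem_filter.1 hB₁
        obtain ⟨hB₂E, hB₂W⟩ := Finset.mem_filter.1 hB₂
        have hQ := hcon B₁ hB₁E B₂ hB₂E hne hB₁W hB₂W
        rw [hL]
        refine Finset.mem_erase.2 ⟨?_, hQ⟩
        intro hcn
        have hle : B₁ ∩ B₂ ⊆ B₁ := Finset.inter_subset_left
        have : B₁ ∩ B₂ = B₁ := Finset.eq_of_subset_of_card_le hle
          (by rw [hcn, hunif B₁ hB₁E])
        have h2 : B₁ ∩ B₂ = B₂ := Finset.eq_of_subset_of_card_le Finset.inter_subset_right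
          (by rw [hcn, hunif B₂ hB₂E])
        exact hne (this ▸ h2))
    have hbound : ∑ i ∈ Finset.range (L.card + 1), (V.card).choose i ≤ A := by
      rw [hA]
      calc ∑ i ∈ Finset.range (L.card + 1), (V.card).choose i
          ≤ ∑ i ∈ Finset.range (L.card + 1), Nat.choose (n ^ m) i :=
            Finset.sum_le_sum fun i _ => Nat.choose_le_choose i hV
        _ ≤ ∑ i ∈ Finset.range (2 * q + 1), Nat.choose (n ^ m) i := by
            refine Finset.sum_le_sum_of_subset ?_
            exact Finset.range_subset_range.2 (by omega)
    omega
end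

section
/- Let n ≥ 2 and let m be an integer with 2 ≤ m ≤ n/2. Set q = ⌊n/(2m)⌋, Q = {1, …, q} ∪ {n−q+1, …, n}, and τ = 1 + 1/(4m). Let H = (V, E) be an n-uniform clique, let W ⊆ V, and let j be the number of edges of E containing W. Suppose there exist two edges B₁, B₂ ∈ E, each disjoint from W, such that |B₁ ∩ B₂| ∉ Q. Then either there exists a vertex x ∉ W such that the number of edges containing W ∪ {x} is at least jτ/n, or there exist vertices x, y ∉ W such that the number of edges containing W ∪ {x, y} is at least jτ²/n². -/
private lemma lt2_e1 (M N Q : ℝ) (hM : 2 ≤ M) (hN : 2*M ≤ N) (hQ : 1 ≤ Q)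
    (h1 : 2*M*Q ≤ N) (h2 : N + 1 ≤ 2*M*(Q+1)) (h5 : 2*Q + 1 ≤ N) :
    0 ≤ 16*M^2*N^2 - 4*M*(4*M+1)*(Q+1)*N - (4*M+1)^2*(N-Q-1)^2 := by
  nlinarith [mul_nonneg (by linarith : (0:ℝ) ≤ 2*M*(Q+1) - N - 1) (by linarith : (0:ℝ) ≤ N), sq_nonneg (2*M*(Q+1) - N - 1), mul_pos (by linarith : (0:ℝ)<M) (by linarith : (0:ℝ)<N), mul_nonneg (by linarith : (0:ℝ) ≤ N - 2*M*Q) (by linarith : (0:ℝ) ≤ N), sq_nonneg (N - Q - 1), mul_pos (by linarith : (0:ℝ)<M) (by linarith : (0:ℝ)<M)]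

private lemma lt2_e2 (M N Q : ℝ) (hM : 2 ≤ M) (hN : 2*M ≤ N) (hQ : 1 ≤ Q)
    (h1 : 2*M*Q ≤ N) (h2 : N + 1 ≤ 2*M*(Q+1)) :
    0 ≤ 16*M^2*N^2 - 4*M*(4*M+1)*(N-Q)*N - (4*M+1)^2*Q^2 := by
  have hx2 : (0:ℝ) ≤ (4*M+1)*Q - N - 2 := by nlinarith
  have hxhi : 2*M*((4*M+1)*Q - N) ≤ (2*M+1)*N := by nlinarith
  have hxlo : (2*M+1)*N - (4*M+1)*(2*M-1) ≤ 2*M*((4*M+1)*Q - N) := by nlinarith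
  set x : ℝ := (4*M+1)*Q - N with hxdef
  have key : 0 ≤ -x^2 + (4*M-2)*N*x - N^2 := by
    have hslope : 0 ≤ (4*M-2)*N - x - 2 := by nlinarith
    rcases le_or_gt N (4*M-1) with hc | hc
    · nlinarith [mul_nonneg (by linarith : (0:ℝ) ≤ x - 2) hslope,
        mul_nonneg (by linarith : (0:ℝ) ≤ N - 2*M) (by linarith : (0:ℝ) ≤ 4*M-1-N)]
    · have hslope2 : 0 ≤ 2*M*((4*M-2)*N - x) - ((2*M+1)*N - (4*M+1)*(2*M-1)) := by nlinarith
      nlinarith [mul_nonneg (by linarith : (0:ℝ) ≤ 2*M*x - ((2*M+1)*N - (4*M+1)*(2*M-1))) hslope2,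
        mul_nonneg (by linarith : (0:ℝ) ≤ N - (4*M-1)) (by nlinarith : (0:ℝ) ≤ N*(16*M^3-8*M^2-8*M-1) - (4*M-1)*(8*M^2-8*M-2) ),
        mul_pos (by linarith : (0:ℝ) < M) (by linarith : (0:ℝ) < N)]
  rw [hxdef] at key
  nlinarith [key]

private lemma lt2_key (M N Q T : ℝ) (hM : 2 ≤ M) (hN : 2*M ≤ N) (hQ : 1 ≤ Q)
    (h1 : 2*M*Q ≤ N) (h2 : N + 1 ≤ 2*M*(Q+1)) (h3 : Q + 1 ≤ T) (h4 : T + Q ≤ N) :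
    (4*M+1)^2*(N-T)^2 + 4*M*(4*M+1)*T*N ≤ 16*M^2*N^2 := by
  have he1 := lt2_e1 M N Q hM hN hQ h1 h2 (by linarith)
  have he2 := lt2_e2 M N Q hM hN hQ h1 h2
  have hp : (0:ℝ) ≤ (T - (Q+1)) * ((N-Q) - T) := mul_nonneg (by linarith) (by linarith)
  rcases eq_or_lt_of_le (by linarith : Q + 1 ≤ N - Q) with hD | hD
  · have hT : T = Q + 1 := by linarith
    rw [hT]; nlinarith [he1]
  · have hDpos : (0:ℝ) < N - 2*Q - 1 := by linarith
    have step : (N-2*Q-1) * (16*M^2*N^2 - ((4*M+1)^2*(N-T)^2 + 4*M*(4*M+1)*T*N))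
        = ((N-Q)-T) * (16*M^2*N^2 - 4*M*(4*M+1)*(Q+1)*N - (4*M+1)^2*(N-Q-1)^2)
        + (T-(Q+1)) * (16*M^2*N^2 - 4*M*(4*M+1)*(N-Q)*N - (4*M+1)^2*Q^2)
        + (4*M+1)^2 * ((T-(Q+1)) * ((N-Q)-T)) * (N-2*Q-1) := by ring
    have hsum : 0 ≤ (N-2*Q-1) * (16*M^2*N^2 - ((4*M+1)^2*(N-T)^2 + 4*M*(4*M+1)*T*N)) := by
      rw [step]
      have t1 := mul_nonneg (by linarith : (0:ℝ) ≤ (N-Q)-T) he1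
      have t2 := mul_nonneg (by linarith : (0:ℝ) ≤ T-(Q+1)) he2
      have t3 := mul_nonneg (mul_nonneg (sq_nonneg (4*M+1)) hp) (by linarith : (0:ℝ) ≤ N-2*Q-1)
      nlinarith [t1, t2, t3]
    have := nonneg_of_mul_nonneg_right hsum hDpos
    linarith [this]

private lemma lt2_pigeon {α : Type*} (S : Finset α) (g : α → ℕ) (c : ℝ) (hS : S.Nonempty)
    (h : c ≤ ∑ x ∈ S, (g x : ℝ)) : ∃ x ∈ S, c / (S.card : ℝ) ≤ (g x : ℝ) := by
  by_contra hc
  push_neg at hc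
  have hlt : ∑ x ∈ S, (g x : ℝ) < ∑ x ∈ S, c / (S.card : ℝ) :=
    Finset.sum_lt_sum_of_nonempty hS hc
  rw [Finset.sum_const, nsmul_eq_mul] at hlt
  have hcard : (0:ℝ) < S.card := by exact_mod_cast Finset.card_pos.mpr hS
  have heq : (S.card : ℝ) * (c / S.card) = c := by field_simp
  linarith [heq ▸ hlt]

set_option maxHeartbeats 1000000 in
theorem lemma_two (n m : ℕ) (hn : 2 ≤ n) (hm : 2 ≤ m) (hmn : 2 * m ≤ n)
    (V : Finset ℕ) (E : Finset (Finset ℕ))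
    (hsub : ∀ e ∈ E, e ⊆ V) (hunif : ∀ e ∈ E, e.card = n)
    (hclique : ∀ e ∈ E, ∀ f ∈ E, (e ∩ f).Nonempty)
    (W : Finset ℕ) (hW : W ⊆ V)
    (hex : ∃ B₁ ∈ E, ∃ B₂ ∈ E, B₁ ∩ W = ∅ ∧ B₂ ∩ W = ∅ ∧
        (B₁ ∩ B₂).card ∉
          Finset.Icc 1 (n / (2 * m)) ∪ Finset.Icc (n - n / (2 * m) + 1) n) :
    (∃ x : ℕ, x ∉ W ∧
        ((E.filter (fun e => W ⊆ e)).card : ℝ) * (1 + 1 / (4 * (m : ℝ))) / (n : ℝ)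
          ≤ ((E.filter (fun e => W ∪ {x} ⊆ e)).card : ℝ)) ∨
    (∃ x y : ℕ, x ∉ W ∧ y ∉ W ∧
        ((E.filter (fun e => W ⊆ e)).card : ℝ) * (1 + 1 / (4 * (m : ℝ))) ^ 2 / (n : ℝ) ^ 2
          ≤ ((E.filter (fun e => W ∪ {x, y} ⊆ e)).card : ℝ)) := by
  obtain ⟨B₁, hB₁, B₂, hB₂, hB₁W, hB₂W, ht⟩ := hex
  have h2m : 0 < 2*m := by omega
  set q := n / (2*m) with hqdef
  have hq1 : 1 ≤ q := (Nat.one_le_div_iff h2m).2 hmn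
  have hqn : q ≤ n := Nat.div_le_self _ _
  have hcard1 : B₁.card = n := hunif _ hB₁
  have hcard2 : B₂.card = n := hunif _ hB₂
  have htBne : (B₁ ∩ B₂).Nonempty := hclique _ hB₁ _ hB₂
  set t := (B₁ ∩ B₂).card with htdef
  have ht1 : 1 ≤ t := Finset.card_pos.2 htBne
  have htn : t ≤ n := hcard1 ▸ Finset.card_le_card Finset.inter_subset_left
  simp only [Finset.mem_union, Finset.mem_Icc, not_or, not_and, not_le] at ht
  have hqt : q + 1 ≤ t := by omega
  have htqn : t + q ≤ n := by omega
  -- real facts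
  have hM : (2:ℝ) ≤ m := by exact_mod_cast hm
  have hN2 : 2*(m:ℝ) ≤ n := by exact_mod_cast hmn
  have hQ1 : (1:ℝ) ≤ q := by exact_mod_cast hq1
  have hMpos : (0:ℝ) < m := by linarith
  have hNpos : (0:ℝ) < n := by linarith
  have h1r : 2*(m:ℝ)*q ≤ n := by
    have h := Nat.div_mul_le_self n (2*m)
    have h' : q * (2*m) ≤ n := h
    calc 2*(m:ℝ)*q = ((q*(2*m) : ℕ) : ℝ) := by push_cast; ring
      _ ≤ n := by exact_mod_cast h'
  have h2r : (n:ℝ) + 1 ≤ 2*m*(q+1) := by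
    have h : n < (q+1) * (2*m) := (Nat.div_lt_iff_lt_mul h2m).1 (Nat.lt_succ_self q)
    have h' : n + 1 ≤ (q+1)*(2*m) := h
    calc (n:ℝ) + 1 = ((n+1 : ℕ) : ℝ) := by push_cast; ring
      _ ≤ (((q+1)*(2*m) : ℕ) : ℝ) := by exact_mod_cast h'
      _ = 2*(m:ℝ)*(q+1) := by push_cast; ring
  have h3r : (q:ℝ) + 1 ≤ t := by exact_mod_cast hqt
  have h4r : (t:ℝ) + q ≤ n := by exact_mod_cast htqn
  have hkey := lt2_key m n q t hM hN2 hQ1 h1r h2r h3r h4r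
  set τ : ℝ := 1 + 1/(4*(m:ℝ)) with hτdef
  have hkey2 : τ^2*((n:ℝ)-t)^2 + τ*t*n ≤ (n:ℝ)^2 := by
    have h16 : (0:ℝ) < 16*(m:ℝ)^2 := by positivity
    refine le_of_mul_le_mul_left ?_ h16
    have e : (16*(m:ℝ)^2)*(τ^2*((n:ℝ)-t)^2 + τ*(t:ℝ)*n)
        = (4*(m:ℝ)+1)^2*((n:ℝ)-t)^2 + 4*m*(4*m+1)*t*n := by
      rw [hτdef]; field_simp; ring
    rw [e]; nlinarith [hkey]
  have htr1 : (1:ℝ) ≤ t := by exact_mod_cast ht1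
  have htpos : (0:ℝ) < t := by linarith
  set F := E.filter (fun e => W ⊆ e) with hF
  have hxW1 : ∀ x ∈ B₁, x ∉ W := by
    intro x hx hxW
    have : x ∈ B₁ ∩ W := Finset.mem_inter.2 ⟨hx, hxW⟩
    rw [hB₁W] at this; exact absurd this (Finset.notMem_empty x)
  have hxW2 : ∀ x ∈ B₂, x ∉ W := by
    intro x hx hxW
    have : x ∈ B₂ ∩ W := Finset.mem_inter.2 ⟨hx, hxW⟩
    rw [hB₂W] at this; exact absurd this (Finset.notMem_empty x)
  classical
  set F1 := F.filter (fun e => (e ∩ (B₁ ∩ B₂)).Nonempty) with hF1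
  set F2 := F.filter (fun e => ¬(e ∩ (B₁ ∩ B₂)).Nonempty) with hF2
  have hab : F1.card + F2.card = F.card :=
    Finset.card_filter_add_card_filter_not _
  rcases le_or_gt ((F.card:ℝ)*τ*t) ((F1.card:ℝ)*n) with hcase | hcase
  · -- single vertex case
    left
    have hA : (F1.card : ℝ) ≤ ∑ x ∈ B₁ ∩ B₂, ((E.filter (fun e => W ∪ {x} ⊆ e)).card : ℝ) := by
      have hnat : F1.card ≤ ∑ x ∈ B₁ ∩ B₂, (E.filter (fun e => W ∪ {x} ⊆ e)).card := by
        calc F1.card ≤ ((B₁ ∩ B₂).biUnion (fun x => E.filter (fun e => W ∪ {x} ⊆ e))).card := by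
              apply Finset.card_le_card
              intro e he
              simp only [hF1, hF, Finset.mem_filter] at he
              obtain ⟨⟨heE, hWe⟩, hne⟩ := he
              obtain ⟨x, hx⟩ := hne
              rw [Finset.mem_inter] at hx
              rw [Finset.mem_biUnion]
              exact ⟨x, hx.2, Finset.mem_filter.2 ⟨heE,
                Finset.union_subset hWe (Finset.singleton_subset_iff.2 hx.1)⟩⟩
          _ ≤ _ := Finset.card_biUnion_le
      exact_mod_cast hnat
    obtain ⟨x, hxT, hxb⟩ := lt2_pigeon (B₁ ∩ B₂)
      (fun x => (E.filter (fun e => W ∪ {x} ⊆ e)).card) (F1.card : ℝ) htBne hA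
    refine ⟨x, hxW1 x (Finset.mem_of_mem_inter_left hxT), ?_⟩
    calc (F.card:ℝ) * τ / n ≤ (F1.card:ℝ) / t := by
          rw [div_le_div_iff₀ hNpos htpos]; linarith
      _ ≤ _ := hxb
  · -- pair case
    right
    set S := (B₁ \ B₂) ×ˢ (B₂ \ B₁) with hS
    have hc1 : (B₁ \ B₂).card = n - t := by
      have := Finset.card_inter_add_card_sdiff B₁ B₂
      omega
    have hc2 : (B₂ \ B₁).card = n - t := by
      have h := Finset.card_inter_add_card_sdiff B₂ B₁
      rw [Finset.inter_comm] at h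
      omega
    have hnt1 : 1 ≤ n - t := by omega
    have hSne : S.Nonempty := by
      apply Finset.Nonempty.product
      · exact Finset.card_pos.1 (by omega)
      · exact Finset.card_pos.1 (by omega)
    have hB : (F2.card : ℝ) ≤ ∑ p ∈ S, ((E.filter (fun e => W ∪ {p.1, p.2} ⊆ e)).card : ℝ) := by
      have hnat : F2.card ≤ ∑ p ∈ S, (E.filter (fun e => W ∪ {p.1, p.2} ⊆ e)).card := by
        calc F2.card ≤ (S.biUnion (fun p => E.filter (fun e => W ∪ {p.1, p.2} ⊆ e))).card := by
              apply Finset.card_le_card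
              intro e he
              simp only [hF2, hF, Finset.mem_filter] at he
              obtain ⟨⟨heE, hWe⟩, hne⟩ := he
              obtain ⟨x, hx⟩ := hclique e heE B₁ hB₁
              rw [Finset.mem_inter] at hx
              have hxB2 : x ∉ B₂ := fun hxB2 => hne ⟨x, Finset.mem_inter.2 ⟨hx.1,
                Finset.mem_inter.2 ⟨hx.2, hxB2⟩⟩⟩
              obtain ⟨y, hy⟩ := hclique e heE B₂ hB₂
              rw [Finset.mem_inter] at hy
              have hyB1 : y ∉ B₁ := fun hyB1 => hne ⟨y, Finset.mem_inter.2 ⟨hy.1,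
                Finset.mem_inter.2 ⟨hyB1, hy.2⟩⟩⟩
              rw [Finset.mem_biUnion]
              refine ⟨(x, y), Finset.mem_product.2 ⟨Finset.mem_sdiff.2 ⟨hx.2, hxB2⟩,
                Finset.mem_sdiff.2 ⟨hy.2, hyB1⟩⟩, Finset.mem_filter.2 ⟨heE, ?_⟩⟩
              apply Finset.union_subset hWe
              rw [Finset.insert_subset_iff, Finset.singleton_subset_iff]
              exact ⟨hx.1, hy.1⟩
          _ ≤ _ := Finset.card_biUnion_le
      exact_mod_cast hnat
    obtain ⟨p, hpS, hpb⟩ := lt2_pigeon S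
      (fun p => (E.filter (fun e => W ∪ {p.1, p.2} ⊆ e)).card) (F2.card : ℝ) hSne hB
    obtain ⟨hp1, hp2⟩ := Finset.mem_product.1 hpS
    refine ⟨p.1, p.2, hxW1 p.1 (Finset.mem_sdiff.1 hp1).1, hxW2 p.2 (Finset.mem_sdiff.1 hp2).1, ?_⟩
    have hScard : (S.card : ℝ) = ((n:ℝ) - t) * ((n:ℝ) - t) := by
      rw [hS, Finset.card_product, hc1, hc2]
      push_cast [Nat.cast_sub htn]
      ring
    have hsrpos : (0:ℝ) < (n:ℝ) - t := by
      have : ((n - t : ℕ) : ℝ) = (n:ℝ) - t := by push_cast [Nat.cast_sub htn]; ring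
      have h1 : (1:ℝ) ≤ ((n - t : ℕ) : ℝ) := by exact_mod_cast hnt1
      linarith [this ▸ h1]
    have hab' : (F1.card : ℝ) + F2.card = F.card := by exact_mod_cast hab
    calc (F.card:ℝ) * τ^2 / n^2 ≤ (F2.card:ℝ) / (S.card : ℝ) := by
          rw [hScard, div_le_div_iff₀ (by positivity) (by positivity)]
          have h5 : (F1.card:ℝ)*n*n < (F.card:ℝ)*τ*t*n := by
            have := mul_lt_mul_of_pos_right hcase hNpos
            linarith [this]
          have h6 : (F.card:ℝ)*(τ^2*((n:ℝ)-t)^2) ≤ (F.card:ℝ)*((n:ℝ)^2 - τ*t*n) := by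
            apply mul_le_mul_of_nonneg_left _ (by positivity)
            linarith [hkey2]
          nlinarith [h5, h6, hab']
      _ ≤ _ := hpb
end

section
/- Let v, n, s be positive integers and let L ⊆ {0, 1, …, n−1} with |L| = s. Let F be a family of n-element subsets of a v-element set such that for any two distinct members B, B′ ∈ F one has |B ∩ B′| ∈ L. Then |F| ≤ ∑_{i=0}^{s} C(v, i). -/
open Finset

theorem frankl_wilson_type (v n s : ℕ) (hv : 0 < v) (hn : 0 < n) (hs : 0 < s)
    (L : Finset ℕ) (hL : L ⊆ Finset.range n) (hLcard : L.card = s)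
    (F : Finset (Finset (Fin v)))
    (hcard : ∀ B ∈ F, B.card = n)
    (hint : ∀ B ∈ F, ∀ B' ∈ F, B ≠ B' → (B ∩ B').card ∈ L) :
    F.card ≤ ∑ i ∈ Finset.range (s + 1), Nat.choose v i := by
  classical
  -- "monomial" functions
  set m : Finset (Fin v) → (↥F → ℝ) := fun S B' => if S ⊆ (B' : Finset (Fin v)) then 1 else 0
    with hm
  set T : Finset (↥F → ℝ) :=
    ((Finset.univ : Finset (Finset (Fin v))).filter (fun S => S.card ≤ s)).image m with hT
  -- key lemma : the intersection polynomial lies in the span of low-degree monomials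
  have key : ∀ (B : Finset (Fin v)) (K : Finset ℕ),
      (fun B' : ↥F => ∏ l ∈ K, (((B ∩ (B' : Finset (Fin v))).card : ℝ) - l)) ∈
        Submodule.span ℝ (m '' {S | S.card ≤ K.card}) := by
    intro B K
    induction K using Finset.induction_on with
    | empty =>
      have he : (fun B' : ↥F => ∏ l ∈ (∅ : Finset ℕ), (((B ∩ (B' : Finset (Fin v))).card : ℝ) - l))
          = m ∅ := by
        funext B'; simp [hm]
      rw [he]
      exact Submodule.subset_span ⟨∅, by simp, rfl⟩
    | @insert l K hl ih =>
      have step : ∀ x ∈ Submodule.span ℝ (m '' {S | S.card ≤ K.card}),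
          (fun B' : ↥F => (((B ∩ (B' : Finset (Fin v))).card : ℝ) - l) * x B') ∈
            Submodule.span ℝ (m '' {S | S.card ≤ K.card + 1}) := by
        intro x hx
        induction hx using Submodule.span_induction with
        | mem x hx =>
          obtain ⟨S, hS, rfl⟩ := hx
          have hScard : S.card ≤ K.card := hS
          have heq : (fun B' : ↥F => (((B ∩ (B' : Finset (Fin v))).card : ℝ) - l) * m S B')
              = (∑ i ∈ B, m (insert i S)) - (l : ℝ) • m S := by
            funext B'
            simp only [hm, Finset.sum_apply, Pi.sub_apply, Pi.smul_apply, smul_eq_mul]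
            by_cases hS' : S ⊆ (B' : Finset (Fin v))
            · rw [if_pos hS']
              have h2 : ∑ i ∈ B, (if insert i S ⊆ (B' : Finset (Fin v)) then (1:ℝ) else 0)
                  = ((B ∩ (B' : Finset (Fin v))).card : ℝ) := by
                have h1 : ∀ i ∈ B, (if insert i S ⊆ (B' : Finset (Fin v)) then (1:ℝ) else 0)
                    = if i ∈ (B' : Finset (Fin v)) then (1:ℝ) else 0 := by
                  intro i _
                  congr 1
                  simp [Finset.insert_subset_iff, hS']
                rw [Finset.sum_congr rfl h1, Finset.sum_boole]
                congr 1
              rw [h2]; ring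
            · rw [if_neg hS']
              have h2 : ∀ i ∈ B, (if insert i S ⊆ (B' : Finset (Fin v)) then (1:ℝ) else 0) = 0 := by
                intro i _
                have hni : ¬ insert i S ⊆ (B' : Finset (Fin v)) := by
                  intro h; exact hS' (Finset.Subset.trans (Finset.subset_insert i S) h)
                rw [if_neg hni]
              rw [Finset.sum_congr rfl h2]
              simp
          rw [heq]
          apply Submodule.sub_mem
          · apply Submodule.sum_mem
            intro i _
            apply Submodule.subset_span
            refine ⟨insert i S, ?_, rfl⟩
            have := Finset.card_insert_le i S
            simp only [Set.mem_setOf_eq]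
            omega
          · apply Submodule.smul_mem
            apply Submodule.subset_span
            exact ⟨S, by simp only [Set.mem_setOf_eq]; omega, rfl⟩
        | zero =>
          have hz : (fun B' : ↥F => (((B ∩ (B' : Finset (Fin v))).card : ℝ) - l) * (0 : ↥F → ℝ) B')
              = 0 := by
            funext B'; simp
          rw [hz]; exact Submodule.zero_mem _
        | add a b _ _ ha hb =>
          have hq : (fun B' : ↥F => (((B ∩ (B' : Finset (Fin v))).card : ℝ) - l) * (a + b) B')
              = (fun B' : ↥F => (((B ∩ (B' : Finset (Fin v))).card : ℝ) - l) * a B')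
              + (fun B' : ↥F => (((B ∩ (B' : Finset (Fin v))).card : ℝ) - l) * b B') := by
            funext B'; simp [Pi.add_apply, mul_add]
          rw [hq]; exact Submodule.add_mem _ ha hb
        | smul r a _ ha =>
          have hq : (fun B' : ↥F => (((B ∩ (B' : Finset (Fin v))).card : ℝ) - l) * (r • a) B')
              = r • fun B' : ↥F => (((B ∩ (B' : Finset (Fin v))).card : ℝ) - l) * a B' := by
            funext B'
            simp only [Pi.smul_apply, smul_eq_mul]
            ring
          rw [hq]; exact Submodule.smul_mem _ r ha
      have heq : (fun B' : ↥F => ∏ l' ∈ insert l K, (((B ∩ (B' : Finset (Fin v))).card : ℝ) - l'))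
          = fun B' : ↥F => (((B ∩ (B' : Finset (Fin v))).card : ℝ) - l) *
              ∏ l' ∈ K, (((B ∩ (B' : Finset (Fin v))).card : ℝ) - l') := by
        funext B'; exact Finset.prod_insert hl
      rw [heq, Finset.card_insert_of_notMem hl]
      exact step _ ih
  -- the family of functions
  set f : ↥F → (↥F → ℝ) :=
    fun B B' => ∏ l ∈ L, ((((B : Finset (Fin v)) ∩ (B' : Finset (Fin v))).card : ℝ) - l)
    with hf
  -- each f B lies in the span of T
  have hmemT : ∀ B : ↥F, f B ∈ Submodule.span ℝ (T : Set (↥F → ℝ)) := by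
    intro B
    have hk := key (B : Finset (Fin v)) L
    rw [hLcard] at hk
    refine Submodule.span_mono ?_ hk
    intro x hx
    obtain ⟨S, hS, rfl⟩ := hx
    rw [hT]
    simp only [Finset.coe_image, Set.mem_image, Finset.mem_coe, Finset.mem_filter,
      Finset.mem_univ, true_and]
    exact ⟨S, hS, rfl⟩
  -- linear independence
  have hindep : LinearIndependent ℝ f := by
    rw [Fintype.linearIndependent_iff]
    intro c hc B₀
    have h0 := congrFun hc B₀
    rw [Finset.sum_apply] at h0
    have hsingle : ∑ B : ↥F, (c B • f B) B₀ = c B₀ * f B₀ B₀ := by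
      rw [Finset.sum_eq_single B₀]
      · simp only [Pi.smul_apply, smul_eq_mul]
      · intro B _ hB
        have hne : (B : Finset (Fin v)) ≠ (B₀ : Finset (Fin v)) := fun h => hB (Subtype.ext h)
        have hmem : ((B : Finset (Fin v)) ∩ (B₀ : Finset (Fin v))).card ∈ L :=
          hint _ B.2 _ B₀.2 hne
        have hz : f B B₀ = 0 := by
          rw [hf]
          exact Finset.prod_eq_zero hmem (by simp)
        simp [hz]
      · intro h; exact absurd (Finset.mem_univ B₀) h
    rw [hsingle] at h0
    have hdiag : f B₀ B₀ = ∏ l ∈ L, ((n : ℝ) - l) := by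
      rw [hf]
      simp [Finset.inter_self, hcard _ B₀.2]
    have hne0 : (∏ l ∈ L, ((n : ℝ) - l)) ≠ 0 := by
      rw [Finset.prod_ne_zero_iff]
      intro l hl
      have hln : l < n := Finset.mem_range.mp (hL hl)
      have : (l : ℝ) < n := by exact_mod_cast hln
      intro h
      linarith [sub_eq_zero.mp h]
    rw [hdiag] at h0
    rcases mul_eq_zero.mp h0 with h | h
    · exact h
    · exact absurd h hne0
  -- transfer to the span and count dimensions
  have hD : FiniteDimensional ℝ (Submodule.span ℝ (T : Set (↥F → ℝ))) :=
    FiniteDimensional.span_finset ℝ T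
  have hindep' : LinearIndependent ℝ
      (fun B : ↥F => (⟨f B, hmemT B⟩ : Submodule.span ℝ (T : Set (↥F → ℝ)))) := by
    apply LinearIndependent.of_comp (Submodule.span ℝ (T : Set (↥F → ℝ))).subtype
    exact hindep
  have h1 : Fintype.card ↥F ≤ Module.finrank ℝ (Submodule.span ℝ (T : Set (↥F → ℝ))) :=
    hindep'.fintype_card_le_finrank
  have h2 : Module.finrank ℝ (Submodule.span ℝ (T : Set (↥F → ℝ))) ≤ T.card :=
    finrank_span_finset_le_card T
  have h3 : T.card ≤ ((Finset.univ : Finset (Finset (Fin v))).filter (fun S => S.card ≤ s)).card :=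
    Finset.card_image_le
  have h4 : ((Finset.univ : Finset (Finset (Fin v))).filter (fun S => S.card ≤ s)).card
      = ∑ i ∈ Finset.range (s + 1), Nat.choose v i := by
    have hbu : (Finset.univ : Finset (Finset (Fin v))).filter (fun S => S.card ≤ s)
        = (Finset.range (s + 1)).biUnion
            (fun i => Finset.powersetCard i (Finset.univ : Finset (Fin v))) := by
      ext S
      simp only [Finset.mem_filter, Finset.mem_univ, true_and, Finset.mem_biUnion,
        Finset.mem_range, Finset.mem_powersetCard, Finset.subset_univ, true_and,
        Nat.lt_succ_iff]
      constructor
      · intro h; exact ⟨S.card, h, rfl⟩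
      · rintro ⟨i, hi, rfl⟩; exact hi
    rw [hbu, Finset.card_biUnion]
    · apply Finset.sum_congr rfl
      intro i _
      rw [Finset.card_powersetCard]
      simp
    · intro i _ j _ hij
      rw [Function.onFun, Finset.disjoint_left]
      intro S hS hS'
      rw [Finset.mem_powersetCard] at hS hS'
      exact hij (hS.2 ▸ hS'.2 ▸ rfl)
  calc F.card = Fintype.card ↥F := (Fintype.card_coe F).symm
    _ ≤ _ := h1
    _ ≤ T.card := h2
    _ ≤ _ := h3
    _ = _ := h4
end

section
/- For every integer n ≥ 2, every n-uniform hypergraph H = (V, E) whose edges pairwise intersect admits a proper coloring with 3 colors; in particular χ(H) ≤ 3 for every n-uniform clique with at least one edge. -/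
theorem clique_three_colorable (n : ℕ) (hn : 2 ≤ n)
    (V : Finset ℕ) (E : Finset (Finset ℕ))
    (hsub : ∀ e ∈ E, e ⊆ V) (hunif : ∀ e ∈ E, e.card = n)
    (hclique : ∀ e ∈ E, ∀ f ∈ E, (e ∩ f).Nonempty) :
    IsProper E 3 ∧ (E.Nonempty → chromNum E ≤ 3) := by
  have hP : IsProper E 3 := by
    rcases E.eq_empty_or_nonempty with rfl | ⟨e0, he0⟩
    · exact ⟨fun _ => 0, fun e he => absurd he (Finset.notMem_empty e)⟩
    · have hcard : e0.card = n := hunif e0 he0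
      have hne : e0.Nonempty := Finset.card_pos.mp (by omega)
      obtain ⟨v, hv⟩ := hne
      refine ⟨fun x => if x = v then 0 else if x ∈ e0 then 1 else 2, ?_⟩
      intro f hf
      by_cases hsubf : f ⊆ e0
      · have hfe : f = e0 :=
          Finset.eq_of_subset_of_card_le hsubf (by rw [hunif f hf, hcard])
        subst hfe
        obtain ⟨w, hw, hwv⟩ : ∃ w ∈ f, w ≠ v := by
          obtain ⟨w, hw⟩ := Finset.exists_mem_ne
            (by rw [hunif f hf]; omega) v
          exact ⟨w, hw.1, hw.2⟩
        exact ⟨v, hv, w, hw, by simp [hwv, hw]⟩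
      · obtain ⟨u, hu, hue⟩ := Finset.not_subset.mp hsubf
        obtain ⟨x, hxmem⟩ := hclique f hf e0 he0
        have hx := Finset.mem_inter.mp hxmem
        refine ⟨u, hu, x, hx.1, ?_⟩
        have huv : u ≠ v := fun h => hue (h ▸ hv)
        simp only [if_neg huv, if_neg hue]
        by_cases hxv : x = v <;> simp [hxv, hx.2]
  exact ⟨hP, fun _ => Nat.sInf_le hP⟩
end

section
/- Let n ≥ 2 and let H = (V, E) be an n-uniform clique with at least one edge. Then the covering number satisfies τ(H) ≤ n, and if moreover the chromatic number χ(H) equals 3, then τ(H) = n. -/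
/-- The covering number: the minimum cardinality of a set `f ⊆ V` intersecting
every edge of `E`. -/
noncomputable def covNum (V : Finset ℕ) (E : Finset (Finset ℕ)) : ℕ :=
  sInf {t | ∃ f : Finset ℕ, f ⊆ V ∧ f.card = t ∧ ∀ e ∈ E, (f ∩ e).Nonempty}

theorem covering_number_of_clique (n : ℕ) (hn : 2 ≤ n)
    (V : Finset ℕ) (E : Finset (Finset ℕ))
    (hsub : ∀ e ∈ E, e ⊆ V) (hunif : ∀ e ∈ E, e.card = n)
    (hclique : ∀ e ∈ E, ∀ f ∈ E, (e ∩ f).Nonempty)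
    (hne : E.Nonempty) :
    covNum V E ≤ n ∧ (chromNum E = 3 → covNum V E = n) := by
  obtain ⟨e₀, he₀⟩ := hne
  have hmem : n ∈ {t | ∃ f : Finset ℕ, f ⊆ V ∧ f.card = t ∧ ∀ e ∈ E, (f ∩ e).Nonempty} :=
    ⟨e₀, hsub e₀ he₀, hunif e₀ he₀, fun e he => hclique e₀ he₀ e he⟩
  have hle : covNum V E ≤ n := Nat.sInf_le hmem
  refine ⟨hle, fun hchrom => ?_⟩
  refine le_antisymm hle (le_csInf ⟨n, hmem⟩ ?_)
  rintro t ⟨f, hfV, hfc, hfcov⟩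
  by_contra hlt
  push_neg at hlt
  -- build a proper 2-coloring
  have hproper : IsProper E 2 := by
    refine ⟨fun x => if x ∈ f then 1 else 0, fun e he => ?_⟩
    obtain ⟨x, hx⟩ := hfcov e he
    simp only [Finset.mem_inter] at hx
    have hcard : (e ∩ f).card < e.card := by
      calc (e ∩ f).card ≤ f.card := Finset.card_le_card (Finset.inter_subset_right)
        _ < n := hfc ▸ hlt
        _ = e.card := (hunif e he).symm
    have : ¬ e ⊆ f := by
      intro hsubf
      rw [Finset.inter_eq_left.mpr hsubf] at hcard
      exact lt_irrefl _ hcard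
    obtain ⟨y, hy, hyf⟩ := Finset.not_subset.mp this
    exact ⟨x, hx.2, y, hy, by simp [hx.1, hyf]⟩
  have : chromNum E ≤ 2 := Nat.sInf_le hproper
  omega
end

section
/- Let n ≥ 2 and let H = (V, E) be an n-uniform clique with chromatic number χ(H) = 3. Then for every set W ⊆ V with |W| = k, where 1 ≤ k ≤ n, the number of edges B ∈ E with W ⊆ B is at most n^(n−k). -/
theorem edges_containing_W (n : ℕ) (hn : 2 ≤ n)
    (V : Finset ℕ) (E : Finset (Finset ℕ))
    (hsub : ∀ e ∈ E, e ⊆ V) (hunif : ∀ e ∈ E, e.card = n)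
    (hclique : ∀ e ∈ E, ∀ f ∈ E, (e ∩ f).Nonempty)
    (hchrom : chromNum E = 3)
    (W : Finset ℕ) (hW : W ⊆ V) (k : ℕ) (hk : W.card = k)
    (hk1 : 1 ≤ k) (hkn : k ≤ n) :
    (E.filter (fun e => W ⊆ e)).card ≤ n ^ (n - k) := by
  have hnot2 : ¬ IsProper E 2 := by
    intro h2
    have h := Nat.sInf_le (show 2 ∈ {k | IsProper E k} from h2)
    rw [chromNum] at hchrom
    omega
  have aux : ∀ d : ℕ, ∀ W : Finset ℕ, W.card + d = n → 1 ≤ W.card →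
      (E.filter (fun e => W ⊆ e)).card ≤ n ^ d := by
    intro d
    induction d with
    | zero =>
      intro W hcard _
      have hsub1 : E.filter (fun e => W ⊆ e) ⊆ {W} := by
        intro e he
        rw [Finset.mem_filter] at he
        have hc : e.card ≤ W.card := by
          rw [hunif e he.1]; omega
        have := Finset.eq_of_subset_of_card_le he.2 hc
        simp [this]
      calc (E.filter (fun e => W ⊆ e)).card ≤ ({W} : Finset (Finset ℕ)).card :=
            Finset.card_le_card hsub1
        _ = 1 := Finset.card_singleton _
        _ ≤ n ^ 0 := by simp
    | succ d ih =>
      intro W hcard h1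
      obtain ⟨A, hA, hmono⟩ : ∃ e ∈ E, ∀ x ∈ e, ∀ y ∈ e,
          (if x ∈ W then (0 : Fin 2) else 1) = (if y ∈ W then 0 else 1) := by
        by_contra hc
        push_neg at hc
        exact hnot2 ⟨fun x => if x ∈ W then 0 else 1, hc⟩
      have hAcard : A.card = n := hunif A hA
      obtain ⟨y, hyA, hyW⟩ : ∃ y ∈ A, y ∉ W := by
        by_contra hc
        push_neg at hc
        have := Finset.card_le_card hc
        omega
      have hdisj : ∀ a ∈ A, a ∉ W := by
        intro a ha haW
        have := hmono a ha y hyA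
        simp [haW, hyW] at this
      have hsubU : E.filter (fun e => W ⊆ e) ⊆
          A.biUnion (fun a => E.filter (fun e => insert a W ⊆ e)) := by
        intro B hB
        rw [Finset.mem_filter] at hB
        obtain ⟨a, haBA⟩ := hclique B hB.1 A hA
        rw [Finset.mem_inter] at haBA
        refine Finset.mem_biUnion.mpr ⟨a, haBA.2, ?_⟩
        rw [Finset.mem_filter]
        exact ⟨hB.1, Finset.insert_subset haBA.1 hB.2⟩
      calc (E.filter (fun e => W ⊆ e)).card
          ≤ (A.biUnion (fun a => E.filter (fun e => insert a W ⊆ e))).card :=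
            Finset.card_le_card hsubU
        _ ≤ ∑ a ∈ A, (E.filter (fun e => insert a W ⊆ e)).card :=
            Finset.card_biUnion_le
        _ ≤ ∑ a ∈ A, n ^ d := by
            refine Finset.sum_le_sum fun a ha => ?_
            have hins : (insert a W).card = W.card + 1 :=
              Finset.card_insert_of_notMem (hdisj a ha)
            exact ih (insert a W) (by omega) (by omega)
        _ = A.card * n ^ d := by rw [Finset.sum_const, smul_eq_mul]
        _ = n ^ (d + 1) := by rw [hAcard, pow_succ, mul_comm]
  have := aux (n - k) W (by omega) (by omega)
  exact this
end

section
/- Let n ≥ 2, let H = (V, E) be an n-uniform clique with chromatic number χ(H) = 3, let v = |V|, and let a be an integer with 1 ≤ a ≤ n − 1. Then |E| ≤ n^(n−a) · C(v, a) / C(n, a). -/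
theorem counting_bound (n : ℕ) (hn : 2 ≤ n)
    (V : Finset ℕ) (E : Finset (Finset ℕ))
    (hsub : ∀ e ∈ E, e ⊆ V) (hunif : ∀ e ∈ E, e.card = n)
    (hclique : ∀ e ∈ E, ∀ f ∈ E, (e ∩ f).Nonempty)
    (hchrom : chromNum E = 3)
    (a : ℕ) (ha1 : 1 ≤ a) (han : a ≤ n - 1) :
    (E.card : ℝ) ≤ (n : ℝ) ^ (n - a) * (Nat.choose V.card a : ℝ) / (Nat.choose n a : ℝ) := by
  have hnot2 : ¬ IsProper E 2 := by
    intro h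
    have : chromNum E ≤ 2 := Nat.sInf_le h
    omega
  have han' : a < n := by omega
  -- From non-2-colorability: any set of size < n misses some edge entirely.
  have hdisj : ∀ A : Finset ℕ, A.card < n → ∃ f ∈ E, ∀ x ∈ f, x ∉ A := by
    intro A hA
    by_contra hc
    push_neg at hc
    apply hnot2
    refine ⟨fun x => if x ∈ A then 0 else 1, ?_⟩
    intro e he
    obtain ⟨x, hxe, hxA⟩ := hc e he
    have hne : ¬ e ⊆ A := by
      intro hsub'
      have := Finset.card_le_card hsub'
      rw [hunif e he] at this; omega
    obtain ⟨y, hye, hyA⟩ := Finset.not_subset.mp hne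
    exact ⟨x, hxe, y, hye, by simp [hxA, hyA]⟩
  -- Degree lemma: a set of size n - k lies in at most n ^ k edges
  have hdeg : ∀ k : ℕ, ∀ A : Finset ℕ, A.card + k = n →
      (E.filter (fun e => A ⊆ e)).card ≤ n ^ k := by
    intro k
    induction k with
    | zero =>
      intro A hA
      have hsub1 : E.filter (fun e => A ⊆ e) ⊆ {A} := by
        intro e he
        simp only [Finset.mem_filter] at he
        have : e = A :=
          (Finset.eq_of_subset_of_card_le he.2 (by rw [hunif e he.1]; omega)).symm
        simp [this]
      calc (E.filter (fun e => A ⊆ e)).card ≤ ({A} : Finset (Finset ℕ)).card :=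
            Finset.card_le_card hsub1
        _ = 1 := Finset.card_singleton A
        _ ≤ n ^ 0 := by simp
    | succ k ih =>
      intro A hA
      obtain ⟨f, hf, hfA⟩ := hdisj A (by omega)
      have hsub2 : E.filter (fun e => A ⊆ e) ⊆
          f.biUnion (fun x => E.filter (fun e => insert x A ⊆ e)) := by
        intro e he
        simp only [Finset.mem_filter] at he
        obtain ⟨x, hx⟩ := hclique e he.1 f hf
        simp only [Finset.mem_inter] at hx
        refine Finset.mem_biUnion.mpr ⟨x, hx.2, ?_⟩
        simp only [Finset.mem_filter]
        exact ⟨he.1, Finset.insert_subset hx.1 he.2⟩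
      calc (E.filter (fun e => A ⊆ e)).card
          ≤ (f.biUnion (fun x => E.filter (fun e => insert x A ⊆ e))).card :=
            Finset.card_le_card hsub2
        _ ≤ ∑ x ∈ f, (E.filter (fun e => insert x A ⊆ e)).card := Finset.card_biUnion_le
        _ ≤ ∑ _x ∈ f, n ^ k := by
            refine Finset.sum_le_sum ?_
            intro x hx
            exact ih (insert x A) (by rw [Finset.card_insert_of_notMem (hfA x hx)]; omega)
        _ = f.card * n ^ k := by rw [Finset.sum_const, smul_eq_mul]
        _ = n ^ (k + 1) := by rw [hunif f hf]; ring
  -- Double counting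
  have key : E.card * n.choose a = ∑ A ∈ V.powersetCard a, (E.filter (fun e => A ⊆ e)).card := by
    have h1 : ∀ A ∈ V.powersetCard a, (E.filter (fun e => A ⊆ e)).card
        = ∑ e ∈ E, (if A ⊆ e then 1 else 0) := by
      intro A _
      rw [Finset.card_filter]
    rw [Finset.sum_congr rfl h1, Finset.sum_comm]
    have h2 : ∀ e ∈ E, (∑ A ∈ V.powersetCard a, if A ⊆ e then 1 else 0) = n.choose a := by
      intro e he
      rw [← Finset.card_filter]
      have : (V.powersetCard a).filter (fun A => A ⊆ e) = e.powersetCard a := by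
        ext A
        simp only [Finset.mem_filter, Finset.mem_powersetCard]
        constructor
        · rintro ⟨⟨_, hca⟩, hAe⟩; exact ⟨hAe, hca⟩
        · rintro ⟨hAe, hca⟩; exact ⟨⟨hAe.trans (hsub e he), hca⟩, hAe⟩
      rw [this, Finset.card_powersetCard, hunif e he]
    rw [Finset.sum_congr rfl h2, Finset.sum_const, smul_eq_mul]
  have hcount : E.card * n.choose a ≤ V.card.choose a * n ^ (n - a) := by
    rw [key]
    calc ∑ A ∈ V.powersetCard a, (E.filter (fun e => A ⊆ e)).card
        ≤ ∑ _A ∈ V.powersetCard a, n ^ (n - a) := by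
          refine Finset.sum_le_sum ?_
          intro A hA
          have hca : A.card = a := (Finset.mem_powersetCard.mp hA).2
          exact hdeg (n - a) A (by omega)
      _ = V.card.choose a * n ^ (n - a) := by
          rw [Finset.sum_const, smul_eq_mul, Finset.card_powersetCard]
  -- conclude over ℝ
  have hchpos : 0 < (n.choose a : ℝ) := by
    exact_mod_cast Nat.choose_pos (le_of_lt han')
  rw [le_div_iff₀ hchpos]
  calc (E.card : ℝ) * (n.choose a : ℝ) = ((E.card * n.choose a : ℕ) : ℝ) := by push_cast; ring
    _ ≤ ((V.card.choose a * n ^ (n - a) : ℕ) : ℝ) := by exact_mod_cast hcount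
    _ = (n : ℝ) ^ (n - a) * (V.card.choose a : ℝ) := by push_cast; ring
end

section
/- Let n ≥ 2 and let c be a real number with 1 < c ≤ n/e, where e is the base of the natural logarithm. Set a = ⌊(1 − 1/(ec)) n⌋ + 1. Then every n-uniform clique H = (V, E) with chromatic number χ(H) = 3 and |V| ≤ n²/c satisfies |E| ≤ n^(n+a) · (n − a)! / (c^a · n!). -/
open Nat

/-- Pick an edge disjoint from `T`, if one exists. -/
noncomputable def pickE (E : Finset (Finset ℕ)) (T : Finset ℕ) : Finset ℕ :=
  if h : ∃ e ∈ E, Disjoint e T then h.choose else ∅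

theorem pickE_spec {E : Finset (Finset ℕ)} {T : Finset ℕ}
    (h : ∃ e ∈ E, Disjoint e T) : pickE E T ∈ E ∧ Disjoint (pickE E T) T := by
  rw [pickE, dif_pos h]
  exact ⟨h.choose_spec.1, h.choose_spec.2⟩

/-- One decoding step: add the `j`-th vertex of the canonical edge disjoint from `T`. -/
noncomputable def stepE (E : Finset (Finset ℕ)) (n : ℕ) (T : Finset ℕ) (j : Fin n) :
    Finset ℕ :=
  insert (((pickE E T).sort (· ≤ ·)).getD j 0) T

theorem exists_code (E : Finset (Finset ℕ)) (n : ℕ)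
    (Htrans : ∀ T : Finset ℕ, T.card < n → ∃ e ∈ E, Disjoint e T)
    (Hclique : ∀ e ∈ E, ∀ f ∈ E, (e ∩ f).Nonempty)
    (Hunif : ∀ e ∈ E, e.card = n) :
    ∀ (k : ℕ) (e : Finset ℕ), e ∈ E → ∀ T : Finset ℕ, T ⊆ e → T.card + k = n →
      ∃ js : List (Fin n), js.length = k ∧ js.foldl (stepE E n) T = e := by
  intro k
  induction k with
  | zero =>
    intro e he T hTe hcard
    have : T = e := Finset.eq_of_subset_of_card_le hTe (by rw [Hunif e he]; omega)
    exact ⟨[], rfl, this⟩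
  | succ k ih =>
    intro e he T hTe hcard
    have hTlt : T.card < n := by omega
    obtain ⟨hf, hdisj⟩ := pickE_spec (Htrans T hTlt)
    set f := pickE E T with hfdef
    have hne : (e ∩ f).Nonempty := Hclique e he f hf
    set v := (e ∩ f).min' hne with hv
    have hvmem := (e ∩ f).min'_mem hne
    have hve : v ∈ e := (Finset.mem_inter.mp hvmem).1
    have hvf : v ∈ f := (Finset.mem_inter.mp hvmem).2
    set l := f.sort (· ≤ ·) with hl
    have hlen : l.length = n := by rw [hl, Finset.length_sort, Hunif f hf]
    have hvl : v ∈ l := (Finset.mem_sort _).mpr hvf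
    have hidx : l.idxOf v < n := by rw [← hlen]; exact List.idxOf_lt_length_iff.mpr hvl
    have hstep : stepE E n T ⟨l.idxOf v, hidx⟩ = insert v T := by
      unfold stepE
      rw [← hfdef, ← hl]
      congr 1
      show l.getD (l.idxOf v) 0 = v
      rw [List.getD_eq_getElem l 0 (by omega)]
      exact List.getElem_idxOf (by omega)
    have hvT : v ∉ T := fun hT => (Finset.disjoint_left.mp hdisj hvf) hT
    have hins : insert v T ⊆ e := Finset.insert_subset hve hTe
    have hc : (insert v T).card + k = n := by
      rw [Finset.card_insert_of_notMem hvT]; omega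
    obtain ⟨js, hlen', hfold⟩ := ih e he (insert v T) hins hc
    exact ⟨⟨l.idxOf v, hidx⟩ :: js, by simp [hlen'],
      by rw [List.foldl_cons, hstep, hfold]⟩

theorem key_count (E : Finset (Finset ℕ)) (V : Finset ℕ) (n a : ℕ) (npos : 0 < n)
    (han : a ≤ n)
    (Htrans : ∀ T : Finset ℕ, T.card < n → ∃ e ∈ E, Disjoint e T)
    (Hclique : ∀ e ∈ E, ∀ f ∈ E, (e ∩ f).Nonempty)
    (Hunif : ∀ e ∈ E, e.card = n)
    (hsub : ∀ e ∈ E, e ⊆ V) :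
    E.card * n.descFactorial a ≤ V.card ^ a * n ^ (n - a) := by
  classical
  set m := n - a with hm
  set D : Finset (Σ e : Finset ℕ, Fin a ↪ {x // x ∈ e}) :=
    E.sigma (fun e => Finset.univ) with hD
  set T0 : (Σ e : Finset ℕ, Fin a ↪ {x // x ∈ e}) → Finset ℕ :=
    fun p => Finset.image (fun i => ((p.2 i : ℕ))) Finset.univ with hT0
  set idx : (Σ e : Finset ℕ, Fin a ↪ {x // x ∈ e}) → (Fin m → Fin n) :=
    fun p => if h : ∃ g : Fin m → Fin n, (List.ofFn g).foldl (stepE E n) (T0 p) = p.1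
      then h.choose else fun _ => ⟨0, npos⟩ with hidxdef
  set Φ : (Σ e : Finset ℕ, Fin a ↪ {x // x ∈ e}) → (Fin a → ℕ) × (Fin m → Fin n) :=
    fun p => ((fun i => ((p.2 i : ℕ))), idx p) with hΦ
  set P : Finset ((Fin a → ℕ) × (Fin m → Fin n)) :=
    (Fintype.piFinset fun _ : Fin a => V) ×ˢ Finset.univ with hP
  -- basic facts about T0
  have hT0sub : ∀ p : (Σ e : Finset ℕ, Fin a ↪ {x // x ∈ e}), T0 p ⊆ p.1 := by
    intro p x hx
    simp only [hT0, Finset.mem_image, Finset.mem_univ, true_and] at hx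
    obtain ⟨i, rfl⟩ := hx
    exact (p.2 i).2
  have hT0card : ∀ p : (Σ e : Finset ℕ, Fin a ↪ {x // x ∈ e}), (T0 p).card = a := by
    intro p
    rw [hT0]
    rw [Finset.card_image_of_injective _ (fun i j hij => p.2.injective (Subtype.ext hij))]
    simp
  have hdec : ∀ p : (Σ e : Finset ℕ, Fin a ↪ {x // x ∈ e}), p.1 ∈ E →
      ∃ g : Fin m → Fin n, (List.ofFn g).foldl (stepE E n) (T0 p) = p.1 := by
    intro p hp
    obtain ⟨js, hlen, hfold⟩ := exists_code E n Htrans Hclique Hunif m p.1 hp (T0 p)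
      (hT0sub p) (by rw [hT0card]; omega)
    refine ⟨fun i => js.get (Fin.cast hlen.symm i), ?_⟩
    have : List.ofFn (fun i : Fin m => js.get (Fin.cast hlen.symm i)) = js := by
      apply List.ext_getElem
      · simp [hlen]
      · intro i h1 h2
        simp [List.getElem_ofFn]
    rw [this, hfold]
  have hspec : ∀ p : (Σ e : Finset ℕ, Fin a ↪ {x // x ∈ e}), p.1 ∈ E →
      (List.ofFn (idx p)).foldl (stepE E n) (T0 p) = p.1 := by
    intro p hp
    have h := hdec p hp
    rw [hidxdef]
    simp only [dif_pos h]
    exact h.choose_spec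
  -- injectivity count
  have hcard : D.card ≤ P.card := by
    apply Finset.card_le_card_of_injOn Φ
    · intro p hp
      rw [hD, Finset.mem_coe, Finset.mem_sigma] at hp
      rw [hP, Finset.mem_coe, Finset.mem_product]
      constructor
      · rw [Fintype.mem_piFinset]
        intro i
        exact hsub p.1 hp.1 (p.2 i).2
      · exact Finset.mem_univ _
    · intro p hp q hq hpq
      simp only [hD, Finset.mem_coe, Finset.mem_sigma] at hp hq
      have h1 : (fun i => ((p.2 i : ℕ))) = (fun i => ((q.2 i : ℕ))) :=
        congrArg Prod.fst hpq
      have h2 : idx p = idx q := congrArg Prod.snd hpq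
      have hT0eq : T0 p = T0 q := by rw [hT0]; simp only; rw [h1]
      have he : p.1 = q.1 := by
        rw [← hspec p hp.1, ← hspec q hq.1, h2, hT0eq]
      obtain ⟨e, u⟩ := p
      obtain ⟨e', u'⟩ := q
      simp only at he
      subst he
      congr 1
      ext i
      exact congrFun h1 i
  -- compute cards
  have hDcard : D.card = E.card * n.descFactorial a := by
    rw [hD, Finset.card_sigma]
    rw [Finset.sum_congr rfl (fun e he => ?_), Finset.sum_const, smul_eq_mul]
    show (Finset.univ : Finset (Fin a ↪ {x // x ∈ e})).card = n.descFactorial a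
    rw [Finset.card_univ, Fintype.card_embedding_eq, Fintype.card_coe, Fintype.card_fin,
      Hunif e he]
  have hPcard : P.card = V.card ^ a * n ^ m := by
    rw [hP, Finset.card_product, Fintype.card_piFinset]
    simp [Finset.card_univ]
  rw [← hDcard, ← hPcard]
  exact hcard

theorem theorem_four_explicit (n : ℕ) (hn : 2 ≤ n) (c : ℝ)
    (hc1 : 1 < c) (hc2 : c ≤ (n : ℝ) / Real.exp 1)
    (V : Finset ℕ) (E : Finset (Finset ℕ))
    (hsub : ∀ e ∈ E, e ⊆ V) (hunif : ∀ e ∈ E, e.card = n)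
    (hclique : ∀ e ∈ E, ∀ f ∈ E, (e ∩ f).Nonempty)
    (hchrom : chromNum E = 3)
    (hV : (V.card : ℝ) ≤ (n : ℝ) ^ 2 / c)
    (a : ℕ) (ha : a = ⌊(1 - 1 / (Real.exp 1 * c)) * (n : ℝ)⌋₊ + 1) :
    (E.card : ℝ) ≤ (n : ℝ) ^ (n + a) * ((n - a)! : ℝ) / (c ^ a * (n ! : ℝ)) := by
  classical
  have npos : 0 < n := by omega
  -- 1 < e
  have hexp : (1:ℝ) < Real.exp 1 := by
    have := Real.exp_one_gt_d9; linarith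
  have hcpos : (0:ℝ) < c := by linarith
  -- a ≤ n
  have htpos : (0:ℝ) < 1 / (Real.exp 1 * c) := by positivity
  have htlt : 1 / (Real.exp 1 * c) < 1 := by
    rw [div_lt_one (by positivity)]
    nlinarith
  have hxn : (1 - 1 / (Real.exp 1 * c)) * (n : ℝ) < n := by
    have hn0 : (0:ℝ) < n := by exact_mod_cast npos
    nlinarith
  have hx0 : (0:ℝ) ≤ (1 - 1 / (Real.exp 1 * c)) * (n : ℝ) := by
    have hn0 : (0:ℝ) ≤ n := by positivity
    nlinarith
  have han : a ≤ n := by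
    have : ⌊(1 - 1 / (Real.exp 1 * c)) * (n : ℝ)⌋₊ < n := by
      rw [Nat.floor_lt hx0]; exact hxn
    omega
  -- no proper 2-coloring
  have hnp2 : ¬ IsProper E 2 := by
    intro h
    have h2 : 2 ∈ {k | IsProper E k} := h
    have := Nat.sInf_le h2
    rw [chromNum] at hchrom
    omega
  -- transversal property
  have Htrans : ∀ T : Finset ℕ, T.card < n → ∃ e ∈ E, Disjoint e T := by
    intro T hT
    by_contra hcon
    push_neg at hcon
    apply hnp2
    refine ⟨fun x => if x ∈ T then 0 else 1, ?_⟩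
    intro e he
    obtain ⟨v, hv⟩ := Finset.not_disjoint_iff.mp (hcon e he)
    have hns : ¬ e ⊆ T := fun hsub' => by
      have := Finset.card_le_card hsub'
      rw [hunif e he] at this
      omega
    obtain ⟨w, hwe, hwT⟩ := Finset.not_subset.mp hns
    refine ⟨v, hv.1, w, hwe, ?_⟩
    simp [hv.2, hwT]
  -- key counting inequality
  have key : E.card * n.descFactorial a ≤ V.card ^ a * n ^ (n - a) :=
    key_count E V n a npos han Htrans hclique hunif hsub
  -- arithmetic
  have hdpos : 0 < n.descFactorial a := by
    rcases Nat.eq_zero_or_pos (n.descFactorial a) with h | h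
    · rw [Nat.descFactorial_eq_zero_iff_lt] at h; omega
    · exact h
  have hfact : ((n - a)! : ℝ) * (n.descFactorial a : ℝ) = (n ! : ℝ) := by
    exact_mod_cast congrArg (Nat.cast (R := ℝ)) (Nat.factorial_mul_descFactorial han)
  have hdposR : (0:ℝ) < (n.descFactorial a : ℝ) := by exact_mod_cast hdpos
  have h1 : (E.card : ℝ) * (n.descFactorial a : ℝ) ≤ (V.card : ℝ) ^ a * (n : ℝ) ^ (n - a) := by
    exact_mod_cast key
  have hV0 : (0:ℝ) ≤ (V.card : ℝ) := by positivity
  have h2 : (V.card : ℝ) ^ a ≤ ((n : ℝ) ^ 2 / c) ^ a := pow_le_pow_left₀ hV0 hV a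
  have hn0 : (0:ℝ) ≤ (n : ℝ) := by positivity
  have h3 : (E.card : ℝ) * (n.descFactorial a : ℝ) ≤ ((n : ℝ) ^ 2 / c) ^ a * (n : ℝ) ^ (n - a) := by
    calc (E.card : ℝ) * (n.descFactorial a : ℝ) ≤ (V.card : ℝ) ^ a * (n : ℝ) ^ (n - a) := h1
      _ ≤ ((n : ℝ) ^ 2 / c) ^ a * (n : ℝ) ^ (n - a) := by
          apply mul_le_mul_of_nonneg_right h2 (by positivity)
  have hpow : ((n : ℝ) ^ 2 / c) ^ a * (n : ℝ) ^ (n - a) = (n : ℝ) ^ (n + a) / c ^ a := by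
    rw [div_pow, ← pow_mul, div_mul_eq_mul_div, ← pow_add]
    congr 2
    omega
  rw [hpow] at h3
  have hfp : (0:ℝ) < ((n - a)! : ℝ) := by exact_mod_cast Nat.factorial_pos (n - a)
  have h4 : (E.card : ℝ) * (n.descFactorial a : ℝ) * c ^ a ≤ (n : ℝ) ^ (n + a) :=
    (le_div_iff₀ (by positivity)).mp h3
  rw [← hfact, le_div_iff₀ (by positivity)]
  nlinarith [mul_le_mul_of_nonneg_right h4 hfp.le]
end

section
/- Fix a real constant c > 1 and set d = c · e^(2/(ec) − 1), where e is the base of the natural logarithm. Then for every ε > 0 there exists N such that for all integers n ≥ N, every n-uniform clique H = (V, E) with chromatic number χ(H) = 3 and |V| ≤ n²/c satisfies |E| ≤ (1 + ε) · (e^(3/2)/√c) · (n/d)^n. -/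
open Finset

/-- If `E` has no proper 2-coloring and all edges have `n > |S|` vertices, then some
edge is disjoint from `S` (otherwise coloring by membership in `S` is proper). -/
lemma exists_disjoint_edge {E : Finset (Finset ℕ)} {n : ℕ}
    (hcard : ∀ e ∈ E, e.card = n) (h2 : ¬ IsProper E 2)
    (S : Finset ℕ) (hS : S.card < n) : ∃ f ∈ E, f ∩ S = ∅ := by
  by_contra h
  push_neg at h
  apply h2
  refine ⟨fun x => if x ∈ S then 0 else 1, fun e he => ?_⟩
  obtain ⟨x, hx⟩ := (h e he)
  have hxe : x ∈ e := (Finset.mem_inter.mp hx).1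
  have hxS : x ∈ S := (Finset.mem_inter.mp hx).2
  have hns : ¬ e ⊆ S := by
    intro hsub
    have := Finset.card_le_card hsub
    have hce := hcard e he
    omega
  obtain ⟨y, hy, hyS⟩ := Finset.not_subset.mp hns
  exact ⟨x, hxe, y, hy, by simp [hxS, hyS]⟩

/-- Key branching bound: an intersecting `n`-uniform family with no proper
2-coloring on at most `n²/c` vertices has at most `∏ min(n, n²/(c j))` edges. -/
lemma count_bound {n : ℕ} {c : ℝ} (hc : 0 < c)
    (V : Finset ℕ) (E : Finset (Finset ℕ))
    (hV : ∀ e ∈ E, e ⊆ V) (hcard : ∀ e ∈ E, e.card = n)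
    (hint : ∀ e ∈ E, ∀ f ∈ E, (e ∩ f).Nonempty)
    (h2 : ¬ IsProper E 2)
    (hVc : (V.card : ℝ) ≤ (n : ℝ) ^ 2 / c) :
    (E.card : ℝ) ≤ ∏ i ∈ Finset.range n, min (n : ℝ) ((n : ℝ) ^ 2 / (c * (i + 1))) := by
  have key : ∀ j, j ≤ n → ∀ S : Finset ℕ, S.card = n - j →
      ((E.filter (fun e => S ⊆ e)).card : ℝ) ≤
        ∏ i ∈ Finset.range j, min (n : ℝ) ((n : ℝ) ^ 2 / (c * (i + 1))) := by
    intro j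
    induction j with
    | zero =>
      intro _ S hS
      simp only [Finset.range_zero, Finset.prod_empty]
      have hsub : E.filter (fun e => S ⊆ e) ⊆ {S} := by
        intro e he
        simp only [Finset.mem_filter] at he
        have h1 : e.card = n := hcard e he.1
        have : S = e := Finset.eq_of_subset_of_card_le he.2 (by omega)
        simp [← this]
      have := Finset.card_le_card hsub
      simp only [Finset.card_singleton] at this
      exact_mod_cast this
    | succ j ih =>
      intro hj S hS
      have hn0 : 0 < n := by omega
      have hSn : S.card < n := by omega
      obtain ⟨f, hfE, hfS⟩ := exists_disjoint_edge hcard h2 S hSn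
      set Q : ℝ := ∏ i ∈ Finset.range j, min (n : ℝ) ((n : ℝ) ^ 2 / (c * (i + 1))) with hQdef
      have hQ0 : 0 ≤ Q := by
        refine Finset.prod_nonneg fun i _ => le_min (by positivity) (by positivity)
      have ihj : ∀ u : ℕ, u ∉ S → ((E.filter (fun e => insert u S ⊆ e)).card : ℝ) ≤ Q := by
        intro u hu
        exact ih (by omega) (insert u S) (by rw [Finset.card_insert_of_notMem hu]; omega)
      -- transversal rule
      have hb1 : ((E.filter (fun e => S ⊆ e)).card : ℝ) ≤ (n : ℝ) * Q := by
        have hsub : E.filter (fun e => S ⊆ e) ⊆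
            f.biUnion (fun u => E.filter (fun e => insert u S ⊆ e)) := by
          intro e he
          simp only [Finset.mem_filter] at he
          obtain ⟨u, hu⟩ := hint e he.1 f hfE
          refine Finset.mem_biUnion.mpr ⟨u, (Finset.mem_inter.mp hu).2, ?_⟩
          simp only [Finset.mem_filter, Finset.insert_subset_iff]
          exact ⟨he.1, (Finset.mem_inter.mp hu).1, he.2⟩
        calc ((E.filter (fun e => S ⊆ e)).card : ℝ)
            ≤ ((f.biUnion (fun u => E.filter (fun e => insert u S ⊆ e))).card : ℝ) := by
              exact_mod_cast Finset.card_le_card hsub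
          _ ≤ ∑ u ∈ f, ((E.filter (fun e => insert u S ⊆ e)).card : ℝ) := by
              exact_mod_cast Finset.card_biUnion_le
          _ ≤ ∑ u ∈ f, Q := by
              refine Finset.sum_le_sum fun u hu => ihj u ?_
              intro huS
              exact (Finset.eq_empty_iff_forall_notMem.mp hfS u) (Finset.mem_inter.mpr ⟨hu, huS⟩)
          _ = (f.card : ℝ) * Q := by rw [Finset.sum_const, nsmul_eq_mul]
          _ = (n : ℝ) * Q := by rw [hcard f hfE]
      -- global pigeonhole rule
      have hb2 : ((E.filter (fun e => S ⊆ e)).card : ℝ) ≤ (n : ℝ) ^ 2 / (c * (j + 1)) * Q := by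
        have heq : ∑ u ∈ V \ S, (E.filter (fun e => insert u S ⊆ e)).card
            = (E.filter (fun e => S ⊆ e)).card * (j + 1) := by
          have h1 : ∀ u : ℕ, E.filter (fun e => insert u S ⊆ e)
              = (E.filter (fun e => S ⊆ e)).filter (fun e => u ∈ e) := by
            intro u
            ext e
            simp only [Finset.mem_filter, Finset.insert_subset_iff]
            tauto
          calc ∑ u ∈ V \ S, (E.filter (fun e => insert u S ⊆ e)).card
              = ∑ u ∈ V \ S, ∑ e ∈ E.filter (fun e => S ⊆ e), if u ∈ e then 1 else 0 := by
                refine Finset.sum_congr rfl fun u _ => ?_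
                rw [h1 u, Finset.card_filter]
            _ = ∑ e ∈ E.filter (fun e => S ⊆ e), ∑ u ∈ V \ S, if u ∈ e then 1 else 0 :=
                Finset.sum_comm
            _ = ∑ e ∈ E.filter (fun e => S ⊆ e), (j + 1) := by
                refine Finset.sum_congr rfl fun e he => ?_
                simp only [Finset.mem_filter] at he
                rw [← Finset.card_filter]
                have h3 : (V \ S).filter (fun u => u ∈ e) = e \ S := by
                  ext u
                  simp only [Finset.mem_filter, Finset.mem_sdiff]
                  constructor
                  · rintro ⟨⟨_, huS⟩, hue⟩; exact ⟨hue, huS⟩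
                  · rintro ⟨hue, huS⟩; exact ⟨⟨hV e he.1 hue, huS⟩, hue⟩
                rw [h3, Finset.card_sdiff_of_subset he.2, hcard e he.1, hS]
                omega
            _ = (E.filter (fun e => S ⊆ e)).card * (j + 1) := by
                rw [Finset.sum_const, smul_eq_mul]
        have hle : ((E.filter (fun e => S ⊆ e)).card : ℝ) * (j + 1) ≤ (n : ℝ) ^ 2 / c * Q := by
          calc ((E.filter (fun e => S ⊆ e)).card : ℝ) * ((j : ℝ) + 1)
              = ∑ u ∈ V \ S, ((E.filter (fun e => insert u S ⊆ e)).card : ℝ) := by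
                rw [← Nat.cast_sum, heq]
                push_cast
                ring
            _ ≤ ∑ u ∈ V \ S, Q := by
                refine Finset.sum_le_sum fun u hu => ihj u (Finset.mem_sdiff.mp hu).2
            _ = ((V \ S).card : ℝ) * Q := by rw [Finset.sum_const, nsmul_eq_mul]
            _ ≤ (V.card : ℝ) * Q := by
                refine mul_le_mul_of_nonneg_right ?_ hQ0
                exact_mod_cast Finset.card_le_card (Finset.sdiff_subset)
            _ ≤ (n : ℝ) ^ 2 / c * Q := mul_le_mul_of_nonneg_right hVc hQ0
        have hj1 : (0 : ℝ) < (j : ℝ) + 1 := by positivity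
        rw [div_mul_eq_div_div, div_mul_eq_mul_div, le_div_iff₀ hj1]
        exact hle
      rw [Finset.prod_range_succ, mul_comm]
      rcases le_total ((n : ℝ)) ((n : ℝ) ^ 2 / (c * (j + 1))) with h | h
      · rw [min_eq_left h]; exact hb1
      · rw [min_eq_right h]
        calc ((E.filter (fun e => S ⊆ e)).card : ℝ) ≤ (n : ℝ) ^ 2 / (c * (j + 1)) * Q := hb2
          _ = (n : ℝ) ^ 2 / (c * ((j : ℝ) + 1)) * Q := by norm_num
  have h0 : E.filter (fun e => (∅ : Finset ℕ) ⊆ e) = E := by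
    apply Finset.filter_true_of_mem
    intro e _
    exact Finset.empty_subset e
  have := key n le_rfl ∅ (by simp)
  rwa [h0] at this

lemma pow_le_factorial_mul_exp (n : ℕ) : (n : ℝ) ^ n ≤ (n.factorial : ℝ) * Real.exp n := by
  have h := Real.sum_le_exp_of_nonneg (x := (n : ℝ)) (by positivity) (n + 1)
  have hterm : (n : ℝ) ^ n / n.factorial ≤ Real.exp n := by
    refine le_trans ?_ h
    refine Finset.single_le_sum (f := fun i => (n : ℝ) ^ i / i.factorial) ?_ ?_
    · intro i _; positivity
    · simp
  have hf : (0 : ℝ) < n.factorial := by exact_mod_cast n.factorial_pos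
  rw [div_le_iff₀ hf] at hterm
  linarith [hterm]

lemma exp_one_le_pow (T : ℕ) (hT : 1 ≤ T) :
    Real.exp 1 ≤ (((T : ℝ) + 1) / T) ^ (T + 1) := by
  have hT0 : (0 : ℝ) < T := by exact_mod_cast hT
  have hx : (0 : ℝ) < ((T : ℝ) + 1) / T := by positivity
  have hlog : 1 - ((T : ℝ) / (T + 1)) ≤ Real.log (((T : ℝ) + 1) / T) := by
    have h := Real.log_le_sub_one_of_pos (x := (T : ℝ) / (T + 1)) (by positivity)
    have hinv : Real.log ((T : ℝ) / (T + 1)) = - Real.log (((T : ℝ) + 1) / T) := by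
      rw [← Real.log_inv]
      congr 1
      field_simp
    rw [hinv] at h
    linarith
  have h1 : (1 : ℝ) ≤ ((T : ℝ) + 1) * Real.log (((T : ℝ) + 1) / T) := by
    have heq : 1 - ((T : ℝ) / (T + 1)) = 1 / ((T : ℝ) + 1) := by field_simp; ring
    rw [heq] at hlog
    have := mul_le_mul_of_nonneg_left hlog (by positivity : (0 : ℝ) ≤ (T : ℝ) + 1)
    calc (1 : ℝ) = ((T : ℝ) + 1) * (1 / ((T : ℝ) + 1)) := by field_simp
      _ ≤ _ := this
  calc Real.exp 1 ≤ Real.exp (((T : ℝ) + 1) * Real.log (((T : ℝ) + 1) / T)) :=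
        Real.exp_le_exp.mpr h1
    _ = (((T : ℝ) + 1) / T) ^ (T + 1) := by
        rw [show ((T : ℝ) + 1) * Real.log (((T : ℝ) + 1) / T)
            = ((T + 1 : ℕ) : ℝ) * Real.log (((T : ℝ) + 1) / T) by push_cast; ring]
        rw [Real.exp_nat_mul, Real.exp_log hx]

lemma factorial_le_stirling (T : ℕ) (hT : 1 ≤ T) :
    (T.factorial : ℝ) ≤ Real.exp 1 * T * ((T : ℝ) / Real.exp 1) ^ T := by
  induction T with
  | zero => omega
  | succ T ih =>
    rcases Nat.eq_or_lt_of_le hT with h1 | h1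
    · rw [← h1]
      norm_num
    · have hT1 : 1 ≤ T := by omega
      have ihT := ih hT1
      have hT0 : (0 : ℝ) < T := by exact_mod_cast hT1
      have he : (0 : ℝ) < Real.exp 1 := Real.exp_pos 1
      have hstep : (T : ℝ) * ((T : ℝ) / Real.exp 1) ^ T
          ≤ (((T : ℝ) + 1) / Real.exp 1) ^ (T + 1) := by
        rw [div_pow, div_pow, mul_div_assoc', div_le_div_iff₀ (by positivity) (by positivity)]
        have hkey := exp_one_le_pow T hT1
        rw [div_pow] at hkey
        rw [le_div_iff₀ (by positivity : (0 : ℝ) < (T : ℝ) ^ (T + 1))] at hkey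
        calc ((T : ℝ) * (T : ℝ) ^ T) * Real.exp 1 ^ (T + 1)
            = (Real.exp 1 * (T : ℝ) ^ (T + 1)) * Real.exp 1 ^ T := by ring
          _ ≤ ((T : ℝ) + 1) ^ (T + 1) * Real.exp 1 ^ T := by
              refine mul_le_mul_of_nonneg_right ?_ (by positivity)
              linarith [hkey]
      calc ((T + 1).factorial : ℝ) = ((T : ℝ) + 1) * (T.factorial : ℝ) := by
            rw [Nat.factorial_succ]; push_cast; ring
        _ ≤ ((T : ℝ) + 1) * (Real.exp 1 * T * ((T : ℝ) / Real.exp 1) ^ T) := by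
            refine mul_le_mul_of_nonneg_left ihT (by positivity)
        _ = Real.exp 1 * ((T : ℝ) + 1) * ((T : ℝ) * ((T : ℝ) / Real.exp 1) ^ T) := by ring
        _ ≤ Real.exp 1 * ((T : ℝ) + 1) * (((T : ℝ) + 1) / Real.exp 1) ^ (T + 1) := by
            refine mul_le_mul_of_nonneg_left hstep (by positivity)
        _ = Real.exp 1 * ((T : ℕ) + 1 : ℕ) * (((T + 1 : ℕ) : ℝ) / Real.exp 1) ^ (T + 1) := by
            push_cast; ring

lemma sq_div_four_le_exp {x : ℝ} (hx : 0 ≤ x) : x ^ 2 / 4 ≤ Real.exp x := by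
  have h1 : x / 2 + 1 ≤ Real.exp (x / 2) := Real.add_one_le_exp (x / 2)
  have h2 : (x / 2) ^ 2 ≤ (x / 2 + 1) ^ 2 := by nlinarith
  have h3 : (x / 2 + 1) ^ 2 ≤ Real.exp (x / 2) ^ 2 := by
    refine pow_le_pow_left₀ (by positivity) h1 2
  have h4 : Real.exp (x / 2) ^ 2 = Real.exp x := by
    rw [sq, ← Real.exp_add]; norm_num
  nlinarith [h2, h3, h4]

lemma prod_min_le {n T : ℕ} {c : ℝ} (hc : 0 < c) (hT : T ≤ n) :
    ∏ i ∈ Finset.range n, min (n : ℝ) ((n : ℝ) ^ 2 / (c * (i + 1))) ≤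
      (n : ℝ) ^ T * ((n : ℝ) ^ 2 / c) ^ (n - T) * ((T.factorial : ℝ) / (n.factorial : ℝ)) := by
  have hfact : T.factorial * ∏ i ∈ Ico T n, (i + 1) = n.factorial := by
    have e1 : ∏ i ∈ Ico T n, (i + 1) = ∏ i ∈ Ico (T + 1) (n + 1), i := Finset.prod_Ico_add' id T n 1
    rw [e1, ← Finset.prod_Ico_id_eq_factorial T,
      Finset.prod_Ico_consecutive _ (by omega) (by omega), Finset.prod_Ico_id_eq_factorial]
  have h1 : ∏ i ∈ Finset.range n, min (n : ℝ) ((n : ℝ) ^ 2 / (c * (i + 1))) ≤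
      ∏ i ∈ Finset.range n, (if i < T then (n : ℝ) else (n : ℝ) ^ 2 / (c * (i + 1))) := by
    refine Finset.prod_le_prod (fun i _ => le_min (by positivity) (by positivity)) ?_
    intro i _
    split
    · exact min_le_left _ _
    · exact min_le_right _ _
  have h2 : ∏ i ∈ Finset.range n, (if i < T then (n : ℝ) else (n : ℝ) ^ 2 / (c * (i + 1)))
      = (n : ℝ) ^ T * ∏ i ∈ Ico T n, (n : ℝ) ^ 2 / (c * (i + 1)) := by
    rw [Finset.range_eq_Ico, ← Finset.prod_Ico_consecutive _ (Nat.zero_le T) hT]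
    congr 1
    · rw [Finset.prod_congr rfl (fun i hi => if_pos (Finset.mem_Ico.mp hi).2),
        Finset.prod_const, Nat.card_Ico, Nat.sub_zero]
    · exact Finset.prod_congr rfl (fun i hi => if_neg (by
        have := (Finset.mem_Ico.mp hi).1; omega))
  have h3 : ∏ i ∈ Ico T n, (n : ℝ) ^ 2 / (c * (i + 1))
      = ((n : ℝ) ^ 2 / c) ^ (n - T) * ((T.factorial : ℝ) / (n.factorial : ℝ)) := by
    have hstep : ∀ i : ℕ, (n : ℝ) ^ 2 / (c * (i + 1)) = ((n : ℝ) ^ 2 / c) * (((i : ℝ) + 1))⁻¹ := by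
      intro i
      field_simp
    rw [Finset.prod_congr rfl (fun i _ => hstep i), Finset.prod_mul_distrib,
      Finset.prod_const, Nat.card_Ico, Finset.prod_inv_distrib]
    congr 1
    have hcast : (∏ i ∈ Ico T n, ((i : ℝ) + 1)) = ((∏ i ∈ Ico T n, (i + 1) : ℕ) : ℝ) := by
      push_cast
      rfl
    rw [hcast]
    have hfr : ((∏ i ∈ Ico T n, (i + 1) : ℕ) : ℝ) = (n.factorial : ℝ) / (T.factorial : ℝ) := by
      rw [eq_div_iff (by exact_mod_cast T.factorial_pos.ne')]
      rw [mul_comm]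
      exact_mod_cast congrArg (Nat.cast : ℕ → ℝ) hfact
    rw [hfr, inv_div]
  calc ∏ i ∈ Finset.range n, min (n : ℝ) ((n : ℝ) ^ 2 / (c * (i + 1)))
      ≤ ∏ i ∈ Finset.range n, (if i < T then (n : ℝ) else (n : ℝ) ^ 2 / (c * (i + 1))) := h1
    _ = (n : ℝ) ^ T * (((n : ℝ) ^ 2 / c) ^ (n - T) * ((T.factorial : ℝ) / (n.factorial : ℝ))) := by
        rw [h2, h3]
    _ = _ := by ring

set_option maxHeartbeats 1000000 in
theorem theorem_four_asymptotic (c : ℝ) (hc : 1 < c) (d : ℝ)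
    (hd : d = c * Real.exp (2 / (Real.exp 1 * c) - 1)) :
    ∀ ε : ℝ, 0 < ε → ∃ N : ℕ, ∀ n : ℕ, N ≤ n →
      ∀ (V : Finset ℕ) (E : Finset (Finset ℕ)),
        (∀ e ∈ E, e ⊆ V) → (∀ e ∈ E, e.card = n) →
        (∀ e ∈ E, ∀ f ∈ E, (e ∩ f).Nonempty) →
        chromNum E = 3 →
        (V.card : ℝ) ≤ (n : ℝ) ^ 2 / c →
        (E.card : ℝ) ≤ (1 + ε) * (Real.exp (3 / 2) / Real.sqrt c) * ((n : ℝ) / d) ^ n := by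
  intro ε hε
  have he1 : (2 : ℝ) < Real.exp 1 := lt_trans (by norm_num) Real.exp_one_gt_d9
  have hc0 : (0 : ℝ) < c := by linarith
  set γ : ℝ := (1 - 2 / Real.exp 1) / c with hγdef
  have hγ : 0 < γ := by
    apply div_pos _ hc0
    have h2e : 2 / Real.exp 1 < 1 := by
      rw [div_lt_one (Real.exp_pos 1)]; linarith
    linarith
  set C0 : ℝ := Real.exp (3 / 2) / Real.sqrt c with hC0def
  have hC0 : 0 < C0 := div_pos (Real.exp_pos _) (Real.sqrt_pos.mpr hc0)
  set M : ℝ := 4 * Real.exp 2 / (C0 * γ ^ 2) with hMdef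
  refine ⟨⌈max M c⌉₊ + 1, ?_⟩
  intro n hn V E hV hcard hint hchrom hVc
  have hd0 : 0 < d := by rw [hd]; positivity
  have h2 : ¬ IsProper E 2 := by
    have hlt : 2 < sInf {k | IsProper E k} := by
      rw [show sInf {k | IsProper E k} = chromNum E from rfl, hchrom]
      norm_num
    intro hp
    exact Nat.notMem_of_lt_sInf hlt hp
  have hmax : max M c ≤ (n : ℝ) := by
    have h1 : (⌈max M c⌉₊ : ℝ) ≤ (n : ℝ) := by
      exact_mod_cast Nat.le_of_succ_le hn
    exact le_trans (Nat.le_ceil _) h1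
  have hMa : M ≤ (n : ℝ) := le_trans (le_max_left _ _) hmax
  have hca : c ≤ (n : ℝ) := le_trans (le_max_right _ _) hmax
  have ha : (0 : ℝ) < (n : ℝ) := by linarith
  have hn1 : 1 ≤ n := by exact_mod_cast ha
  set T : ℕ := ⌊(n : ℝ) / c⌋₊ with hTdef
  have hTle : (T : ℝ) ≤ (n : ℝ) / c := Nat.floor_le (by positivity)
  have hT1 : 1 ≤ T := by
    apply Nat.le_floor
    rw [Nat.cast_one, le_div_iff₀ hc0, one_mul]
    exact hca
  have hTa : (T : ℝ) ≤ (n : ℝ) := hTle.trans (div_le_self ha.le hc.le)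
  have hTn : T ≤ n := by exact_mod_cast hTa
  have hTa1 : (n : ℝ) / c < (T : ℝ) + 1 := Nat.lt_floor_add_one _
  have hT0 : (0 : ℝ) < (T : ℝ) := by exact_mod_cast hT1
  -- combinatorial bound
  have hcount := count_bound hc0 V E hV hcard hint h2 hVc
  have hprod := prod_min_le (n := n) (T := T) hc0 hTn
  -- factorial estimates
  have hnfact : (0 : ℝ) < (n.factorial : ℝ) := by exact_mod_cast n.factorial_pos
  have hTfact := factorial_le_stirling T hT1
  have hpow := pow_le_factorial_mul_exp n
  have hfrac : (T.factorial : ℝ) / (n.factorial : ℝ)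
      ≤ (Real.exp 1 * T * ((T : ℝ) / Real.exp 1) ^ T) * (Real.exp (n : ℝ) / (n : ℝ) ^ n) := by
    have hden : (n : ℝ) ^ n / Real.exp (n : ℝ) ≤ (n.factorial : ℝ) := by
      rw [div_le_iff₀ (Real.exp_pos (n : ℝ))]
      exact hpow
    have hdpos : (0 : ℝ) < (n : ℝ) ^ n / Real.exp (n : ℝ) := by positivity
    have := div_le_div₀ (by positivity) hTfact hdpos hden
    calc (T.factorial : ℝ) / (n.factorial : ℝ)
        ≤ (Real.exp 1 * T * ((T : ℝ) / Real.exp 1) ^ T) / ((n : ℝ) ^ n / Real.exp (n : ℝ)) := this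
      _ = (Real.exp 1 * T * ((T : ℝ) / Real.exp 1) ^ T) * (Real.exp (n : ℝ) / (n : ℝ) ^ n) := by
          rw [div_div_eq_mul_div, mul_div_assoc]
  have hTpow : ((T : ℝ) / Real.exp 1) ^ T ≤ ((n : ℝ) / c) ^ T * Real.exp (1 - (n : ℝ) / c) := by
    have h1 : ((T : ℝ) / Real.exp 1) ^ T ≤ ((n : ℝ) / c) ^ T / Real.exp 1 ^ T := by
      rw [← div_pow]
      gcongr
    have h2' : Real.exp 1 ^ T = Real.exp (T : ℝ) := by
      rw [← Real.exp_nat_mul]; norm_num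
    calc ((T : ℝ) / Real.exp 1) ^ T ≤ ((n : ℝ) / c) ^ T / Real.exp (T : ℝ) := by rw [← h2']; exact h1
      _ = ((n : ℝ) / c) ^ T * (Real.exp (T : ℝ))⁻¹ := by rw [div_eq_mul_inv]
      _ ≤ ((n : ℝ) / c) ^ T * Real.exp (1 - (n : ℝ) / c) := by
          gcongr
          rw [← Real.exp_neg]
          exact Real.exp_le_exp.mpr (by linarith)
  -- key exponential inequality
  have hTexp : (T : ℝ) * Real.exp 2 ≤ C0 * Real.exp (γ * (n : ℝ)) := by
    have h4 : 4 * Real.exp 2 ≤ (n : ℝ) * (C0 * γ ^ 2) := by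
      rw [hMdef, div_le_iff₀ (by positivity)] at hMa
      linarith [hMa]
    have h5 : (n : ℝ) * Real.exp 2 ≤ C0 * ((γ * (n : ℝ)) ^ 2 / 4) := by
      nlinarith [mul_le_mul_of_nonneg_left h4 ha.le]
    have h6 : (γ * (n : ℝ)) ^ 2 / 4 ≤ Real.exp (γ * (n : ℝ)) := sq_div_four_le_exp (by positivity)
    calc (T : ℝ) * Real.exp 2 ≤ (n : ℝ) * Real.exp 2 :=
          mul_le_mul_of_nonneg_right hTa (Real.exp_pos 2).le
      _ ≤ C0 * ((γ * (n : ℝ)) ^ 2 / 4) := h5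
      _ ≤ C0 * Real.exp (γ * (n : ℝ)) := mul_le_mul_of_nonneg_left h6 hC0.le
  have hstep2 : (T : ℝ) * Real.exp ((n : ℝ) + 2 - (n : ℝ) / c)
      ≤ C0 * Real.exp ((n : ℝ) * (1 - 2 / (Real.exp 1 * c))) := by
    have hsplit1 : (n : ℝ) + 2 - (n : ℝ) / c = 2 + ((n : ℝ) - (n : ℝ) / c) := by ring
    have hsplit2 : (n : ℝ) * (1 - 2 / (Real.exp 1 * c)) = γ * (n : ℝ) + ((n : ℝ) - (n : ℝ) / c) := by
      rw [hγdef]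
      field_simp
      ring
    rw [hsplit1, hsplit2, Real.exp_add, Real.exp_add, ← mul_assoc, ← mul_assoc]
    exact mul_le_mul_of_nonneg_right hTexp (Real.exp_pos _).le
  -- power identity for d
  have hpowd : ((n : ℝ) / c) ^ n * Real.exp ((n : ℝ) * (1 - 2 / (Real.exp 1 * c))) = ((n : ℝ) / d) ^ n := by
    have h1 : (n : ℝ) / d = ((n : ℝ) / c) * Real.exp (1 - 2 / (Real.exp 1 * c)) := by
      have hneg : -(2 / (Real.exp 1 * c) - 1) = 1 - 2 / (Real.exp 1 * c) := by ring
      rw [hd, div_mul_eq_div_div, div_eq_mul_inv ((n : ℝ) / c), ← Real.exp_neg, hneg]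
    rw [h1, mul_pow, ← Real.exp_nat_mul]
  -- main chain
  obtain ⟨k, hk⟩ : ∃ k, n = T + k := ⟨n - T, by omega⟩
  have halg : (n : ℝ) ^ T * ((n : ℝ) ^ 2 / c) ^ (n - T) *
        ((Real.exp 1 * (T : ℝ) * (((n : ℝ) / c) ^ T * Real.exp (1 - (n : ℝ) / c))) * (Real.exp (n : ℝ) / (n : ℝ) ^ n))
      = ((n : ℝ) / c) ^ n * ((T : ℝ) * Real.exp ((n : ℝ) + 2 - (n : ℝ) / c)) := by
    have hexp : Real.exp 1 * Real.exp (1 - (n : ℝ) / c) * Real.exp (n : ℝ) = Real.exp ((n : ℝ) + 2 - (n : ℝ) / c) := by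
      rw [← Real.exp_add, ← Real.exp_add]
      ring_nf
    rw [← hexp, hk, Nat.add_sub_cancel_left]
    set x : ℝ := ((T + k : ℕ) : ℝ) with hxdef
    have hx0 : x ≠ 0 := Nat.cast_ne_zero.mpr (by omega)
    field_simp
    ring
  calc (E.card : ℝ)
      ≤ ∏ i ∈ Finset.range n, min (n : ℝ) ((n : ℝ) ^ 2 / (c * (i + 1))) := hcount
    _ ≤ (n : ℝ) ^ T * ((n : ℝ) ^ 2 / c) ^ (n - T) * ((T.factorial : ℝ) / (n.factorial : ℝ)) := hprod
    _ ≤ (n : ℝ) ^ T * ((n : ℝ) ^ 2 / c) ^ (n - T) *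
          ((Real.exp 1 * T * ((T : ℝ) / Real.exp 1) ^ T) * (Real.exp (n : ℝ) / (n : ℝ) ^ n)) := by
        refine mul_le_mul_of_nonneg_left hfrac (by positivity)
    _ ≤ (n : ℝ) ^ T * ((n : ℝ) ^ 2 / c) ^ (n - T) *
          ((Real.exp 1 * T * (((n : ℝ) / c) ^ T * Real.exp (1 - (n : ℝ) / c))) * (Real.exp (n : ℝ) / (n : ℝ) ^ n)) := by
        refine mul_le_mul_of_nonneg_left ?_ (by positivity)
        refine mul_le_mul_of_nonneg_right ?_ (by positivity)
        exact mul_le_mul_of_nonneg_left hTpow (by positivity)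
    _ = ((n : ℝ) / c) ^ n * ((T : ℝ) * Real.exp ((n : ℝ) + 2 - (n : ℝ) / c)) := halg
    _ ≤ ((n : ℝ) / c) ^ n * (C0 * Real.exp ((n : ℝ) * (1 - 2 / (Real.exp 1 * c)))) :=
        mul_le_mul_of_nonneg_left hstep2 (by positivity)
    _ = C0 * (((n : ℝ) / c) ^ n * Real.exp ((n : ℝ) * (1 - 2 / (Real.exp 1 * c)))) := by ring
    _ = C0 * ((n : ℝ) / d) ^ n := by rw [hpowd]
    _ ≤ (1 + ε) * C0 * ((n : ℝ) / d) ^ n := by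
        have hpd : (0 : ℝ) ≤ ((n : ℝ) / d) ^ n := by positivity
        nlinarith [mul_nonneg (mul_nonneg hε.le hC0.le) hpd]
end
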